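/- arXiv:1508.03831 — 3 statements merged into one kernel-verified Lean document; each statement's English description precedes it below -/
import Mathlib

section
/- Let κ be an uncountable regular cardinal and let T be a κ-Aronszajn tree that does not split at limit levels. If there is a stationary subset S of κ that is nonstationary with respect to T, then the specialization partial order P(T) is κ-Knaster. -/
universe u v

open Cardinal

namespace Layered

variable {P : Type u}

section
variable [PartialOrder P]

/-- Two conditions are compatible if they have a common lower bound. -/
def Compat (p q : P) : Prop := ∃ r, r ≤ p ∧ r ≤ q

/-- Compatibility witnessed inside a suborder `S`. -/
def CompatIn (S : Set P) (p q : P) : Prop := ∃ r ∈ S, r ≤ p ∧ r ≤ q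

/-- An antichain: a set of pairwise incompatible conditions. -/
def IsPOAntichain (A : Set P) : Prop := ∀ p ∈ A, ∀ q ∈ A, p ≠ q → ¬ Compat p q

/-- A maximal antichain: every condition is compatible with some member. -/
def IsMaxAntichain (A : Set P) : Prop := IsPOAntichain A ∧ ∀ p : P, ∃ q ∈ A, Compat p q

/-- `S` is a regular suborder of `P`: the inclusion preserves incompatibility and
maximal antichains of `S` are maximal antichains of `P`. -/
def RegularSuborder (S : Set P) : Prop :=
  (∀ p ∈ S, ∀ q ∈ S, Compat p q → CompatIn S p q) ∧
  ∀ A ⊆ S, (∀ p ∈ A, ∀ q ∈ A, p ≠ q → ¬ CompatIn S p q) →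
    (∀ p ∈ S, ∃ q ∈ A, CompatIn S p q) → ∀ p : P, ∃ q ∈ A, Compat p q

/-- `Reg_κ(P)`: regular suborders of size less than `κ`. -/
def RegSub (κ : Cardinal.{u}) (S : Set P) : Prop := RegularSuborder S ∧ #S < κ

end

/-- `P` satisfies the `κ`-chain condition. -/
def CC (κ : Cardinal.{u}) (P : Type u) [PartialOrder P] : Prop :=
  ∀ A : Set P, IsPOAntichain A → #A < κ

/-- `P` is `κ`-Knaster. -/
def Knaster (κ : Cardinal.{u}) (P : Type u) [PartialOrder P] : Prop :=
  ∀ A : Set P, #A = κ → ∃ B ⊆ A, #B = κ ∧ ∀ p ∈ B, ∀ q ∈ B, Compat p q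

/-- A club in `P_κ(Y)` for `Y` a subset of `X`: a collection of subsets of `Y` of size `< κ`
that is `⊆`-cofinal among such sets and closed under unions of `⊆`-chains of length `< κ`. -/
def SubClub (κ : Cardinal.{u}) {X : Type u} (Y : Set X) (C : Set (Set X)) : Prop :=
  (∀ c ∈ C, c ⊆ Y ∧ #c < κ) ∧
  (∀ a : Set X, a ⊆ Y → #a < κ → ∃ c ∈ C, a ⊆ c) ∧
  ∀ D : Set (Set X), D.Nonempty → D ⊆ C → IsChain (· ⊆ ·) D → #D < κ → ⋃₀ D ∈ C

/-- A club in `P_κ(X)`. -/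
def PkClub (κ : Cardinal.{u}) {X : Type u} (C : Set (Set X)) : Prop :=
  SubClub κ Set.univ C

/-- A stationary subset of `P_κ(X)` (Jech's notion): one meeting every club. -/
def PkStat (κ : Cardinal.{u}) {X : Type u} (S : Set (Set X)) : Prop :=
  ∀ C : Set (Set X), PkClub κ C → (S ∩ C).Nonempty

/-- `P` is `κ`-stationarily layered: `Reg_κ(P)` is stationary in `P_κ(P)`. -/
def StationarilyLayered (κ : Cardinal.{u}) (P : Type u) [PartialOrder P] : Prop :=
  PkStat κ {S : Set P | RegSub κ S}

/-- `P` is `<κ`-linked: there is a colouring of `P` by fewer than `κ` colours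
that is injective on antichains. -/
def LtLinked (κ : Cardinal.{u}) (P : Type u) [PartialOrder P] : Prop :=
  ∃ (C : Type u) (c : P → C), #C < κ ∧
    ∀ p q : P, c p = c q → Compat p q

/-- `κ` is weakly compact: `κ` is uncountable and `κ → (κ)²_μ` holds for all `μ < κ`. -/
def WeaklyCompact (κ : Cardinal.{u}) : Prop :=
  ℵ₀ < κ ∧ ∀ (C : Type u) (c : κ.ord.ToType → κ.ord.ToType → C), #C < κ →
    ∃ H : Set κ.ord.ToType, #H = κ ∧ ∃ d : C, ∀ a ∈ H, ∀ b ∈ H, a < b → c a b = d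

/-- A normal (fine, `<κ`-complete by normality) filter on `P_κ(X)`. -/
def IsNormalFilterOn (κ : Cardinal.{u}) {X : Type u} (F : Filter (Set X)) : Prop :=
  F.NeBot ∧ {a : Set X | #a < κ} ∈ F ∧ (∀ x : X, {a : Set X | x ∈ a} ∈ F) ∧
  ∀ f : X → Set (Set X), (∀ x, f x ∈ F) → {a : Set X | ∀ x ∈ a, a ∈ f x} ∈ F

/-- `P` is `F`-layered (`F` a filter on `P_κ(X)`, `X` of cardinality `λ`). -/
def FLayered (κ : Cardinal.{u}) {X : Type u} (F : Filter (Set X))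
    (P : Type u) [PartialOrder P] : Prop :=
  #P ≤ #X ∧ ∀ s : X → P, Function.Surjective s →
    {a : Set X | #a < κ ∧ RegSub κ (s '' a)} ∈ F

/-- `lev` exhibits the partial order `T` as a set-theoretic tree: it has a root,
`lev` is the level function (order type of the set of predecessors), the predecessors
of each node are linearly ordered, and each node has predecessors on all smaller levels. -/
def IsLeveledTree (T : Type u) [PartialOrder T] (lev : T → Ordinal.{v}) : Prop :=
  (∃ r : T, ∀ t, r ≤ t) ∧
  (∀ s t : T, s < t → lev s < lev t) ∧
  (∀ s s' t : T, s ≤ t → s' ≤ t → s ≤ s' ∨ s' ≤ s) ∧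
  ∀ t : T, ∀ α : Ordinal.{v}, α < lev t → ∃ s : T, s ≤ t ∧ lev s = α

/-- The tree has height `o`. -/
def HasHeight (T : Type u) [PartialOrder T] (lev : T → Ordinal.{v}) (o : Ordinal.{v}) : Prop :=
  (∀ t, lev t < o) ∧ ∀ α < o, ∃ t, lev t = α

/-- A cofinal branch: a downward closed chain meeting every level below `o`. -/
def CofinalBranch (T : Type u) [PartialOrder T] (lev : T → Ordinal.{v}) (o : Ordinal.{v})
    (B : Set T) : Prop :=
  (∀ t ∈ B, ∀ s, s ≤ t → s ∈ B) ∧ IsChain (· ≤ ·) B ∧ ∀ α < o, ∃ t ∈ B, lev t = α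

/-- A κ-Aronszajn tree: height κ, levels of size < κ, no cofinal branch. -/
def Aronszajn (κ : Cardinal.{u}) (T : Type u) [PartialOrder T] (lev : T → Ordinal.{u}) : Prop :=
  IsLeveledTree T lev ∧ HasHeight T lev κ.ord ∧
  (∀ α : Ordinal.{u}, #{t : T | lev t = α} < κ) ∧
  ¬ ∃ B : Set T, CofinalBranch T lev κ.ord B

/-- `S` is nonstationary with respect to the tree `T`: there is a regressive map on the nodes
with level in `S` such that each preimage admits a colouring by fewer than κ colours that is
injective on chains. -/
def NonstatWrt (κ : Cardinal.{u}) (T : Type v) [PartialOrder T] (lev : T → Ordinal.{u})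
    (S : Set Ordinal.{u}) : Prop :=
  ∃ r : T → T,
    (∀ t : T, lev t ∈ S → (∃ s, s < t) → r t < t) ∧
    ∀ t : T, ∃ μ : Cardinal.{u}, μ < κ ∧ ∃ c : T → μ.ord.ToType,
      ∀ u v : T, lev u ∈ S → lev v ∈ S → r u = t → r v = t →
        u ≤ v → c u = c v → u = v

/-- Conditions of the specialization forcing: finite partial functions from `T` to `ω`
(coded as finite functional graphs) that are injective on chains of `T`. -/
def SpecCond (T : Type u) [PartialOrder T] : Type u :=
  {s : Finset (T × ℕ) //
    (∀ p ∈ s, ∀ q ∈ s, (p : T × ℕ).1 = (q : T × ℕ).1 → p = q) ∧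
    ∀ p ∈ s, ∀ q ∈ s, ((p : T × ℕ).1 ≤ (q : T × ℕ).1 ∨ (q : T × ℕ).1 ≤ (p : T × ℕ).1) →
      (p : T × ℕ).2 = (q : T × ℕ).2 → p = q}

/-- The specialization forcing `ℙ(T)`, ordered by reverse inclusion. -/
instance specPO (T : Type u) [PartialOrder T] : PartialOrder (SpecCond T) where
  le p q := q.1 ⊆ p.1
  le_refl p := Finset.Subset.refl _
  le_trans p q r h1 h2 := Finset.Subset.trans h2 h1
  le_antisymm p q h1 h2 := Subtype.ext (Finset.Subset.antisymm h2 h1)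

/-- A club (closed unbounded set) in an ordinal `o`. -/
def ClubInOrd (o : Ordinal.{u}) (C : Set Ordinal.{u}) : Prop :=
  C ⊆ Set.Iio o ∧ (∀ α < o, ∃ β ∈ C, α < β) ∧
  ∀ α < o, α ≠ 0 → (∀ β < α, ∃ γ ∈ C, β < γ ∧ γ < α) → α ∈ C

/-- A stationary subset of an ordinal `o`. -/
def StatInOrd (o : Ordinal.{u}) (S : Set Ordinal.{u}) : Prop :=
  S ⊆ Set.Iio o ∧ ∀ C : Set Ordinal.{u}, ClubInOrd o C → (S ∩ C).Nonempty

/-- `T` does not split at limit levels. -/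
def NoSplitAtLimits (T : Type u) [PartialOrder T] (lev : T → Ordinal.{u}) : Prop :=
  ∀ t₀ t₁ : T, lev t₀ = lev t₁ → Order.IsSuccLimit (lev t₀) → t₀ ≠ t₁ →
    ∃ s₀ s₁ : T, lev s₀ = lev s₁ ∧ lev s₀ < lev t₀ ∧ s₀ ≠ s₁ ∧ s₀ < t₀ ∧ s₁ < t₁


/-! ### Auxiliary infrastructure: clubs, Fodor, pigeonhole, tree lemmas -/

noncomputable section Infra
open Classical Set

variable {κ : Cardinal.{u}}

theorem countable_lt_kappa (hunc : ℵ₀ < κ) (ι : Type u) [Countable ι] : #ι < κ :=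
  lt_of_le_of_lt Cardinal.mk_le_aleph0 hunc

theorem sup_lt_ord' (hreg : κ.IsRegular) {ι : Type u} (hι : #ι < κ)
    (f : ι → Ordinal.{u}) (hf : ∀ i, f i < κ.ord) : (⨆ i, f i) < κ.ord :=
  Cardinal.iSup_lt_ord_lift_of_isRegular hreg (by rwa [Cardinal.lift_id]) hf

theorem ord_limit (hreg : κ.IsRegular) : Order.IsSuccLimit (κ.ord) :=
  Cardinal.isSuccLimit_ord hreg.aleph0_le

theorem omega_iter (hreg : κ.IsRegular) (hunc : ℵ₀ < κ)
    (next : Ordinal.{u} → Ordinal.{u})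
    (hnext : ∀ β < κ.ord, β < next β ∧ next β < κ.ord)
    {α : Ordinal.{u}} (hα : α < κ.ord) :
    ∃ g : ℕ → Ordinal.{u}, ∃ β : Ordinal.{u},
      (∀ n, g (n+1) = next (g n)) ∧ (∀ n, g n < κ.ord) ∧
      (∀ n, g n < g (n+1)) ∧ α < β ∧ β < κ.ord ∧ 0 < β ∧
      (∀ n, g n < β) ∧ ∀ x < β, ∃ n, x < g n := by
  have ho : Order.IsSuccLimit (κ.ord) := ord_limit hreg
  let g : ℕ → Ordinal.{u} := fun n => Nat.rec (α + 1) (fun _ β => next β) n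
  have hg0 : g 0 = α + 1 := rfl
  have hgs : ∀ n, g (n+1) = next (g n) := fun n => rfl
  have hlt : ∀ n, g n < κ.ord := by
    intro n; induction n with
    | zero => rw [hg0, Ordinal.add_one_eq_succ]; exact ho.succ_lt hα
    | succ n ih => rw [hgs]; exact (hnext _ ih).2
  have hmono : ∀ n, g n < g (n+1) := fun n => by rw [hgs]; exact (hnext _ (hlt n)).1
  let β := ⨆ n : ULift.{u} ℕ, g n.down
  have hβlt : β < κ.ord := sup_lt_ord' hreg (countable_lt_kappa hunc _) _ (fun i => hlt _)
  have hble : ∀ n, g n ≤ β := fun n =>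
    le_ciSup (Ordinal.bddAbove_range.{u,u} _) (ULift.up n)
  have hblt : ∀ n, g n < β := fun n => lt_of_lt_of_le (hmono n) (hble (n+1))
  have h0 : α < g 0 := by rw [hg0, Ordinal.add_one_eq_succ]; exact Order.lt_succ α
  refine ⟨g, β, hgs, hlt, hmono, lt_trans h0 (hblt 0), hβlt,
    lt_of_le_of_lt zero_le (lt_trans h0 (hblt 0)), hblt, ?_⟩
  intro x hx
  by_contra hcon
  push_neg at hcon
  exact absurd (ciSup_le fun (n : ULift.{u} ℕ) => hcon n.down) (not_le.mpr hx)

theorem clubInOrd_Iio (hreg : κ.IsRegular) : ClubInOrd κ.ord (Set.Iio κ.ord) := by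
  refine ⟨subset_rfl, fun α hα => ⟨α + 1, ?_, ?_⟩, fun α hα _ _ => hα⟩
  · rw [Set.mem_Iio, Ordinal.add_one_eq_succ]; exact (ord_limit hreg).succ_lt hα
  · rw [Ordinal.add_one_eq_succ]; exact Order.lt_succ α

theorem clubInOrd_iInter (hreg : κ.IsRegular) (hunc : ℵ₀ < κ) {ι : Type u} [Nonempty ι]
    (hι : #ι < κ) {C : ι → Set Ordinal.{u}} (hC : ∀ i, ClubInOrd κ.ord (C i)) :
    ClubInOrd κ.ord (⋂ i, C i) := by
  refine ⟨(Set.iInter_subset _ (Classical.arbitrary ι)).trans (hC _).1, ?_, ?_⟩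
  · intro α hα
    choose! nxt hnxt1 hnxt2 using fun (i : ι) (β : Ordinal.{u}) (h : β < κ.ord) =>
      (hC i).2.1 β h
    set next : Ordinal.{u} → Ordinal.{u} := fun β => ⨆ i, nxt i β with hnext_def
    have hnext : ∀ β < κ.ord, β < next β ∧ next β < κ.ord := by
      intro β hβ
      have hle : ∀ i, nxt i β ≤ next β := fun i => le_ciSup (Ordinal.bddAbove_range.{u,u} _) i
      constructor
      · exact lt_of_lt_of_le (hnxt2 (Classical.arbitrary ι) β hβ) (hle _)
      · exact sup_lt_ord' hreg hι _ (fun i => (hC i).1 (hnxt1 i β hβ))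
    obtain ⟨g, β, hgs, hlt, hmono, hαβ, hβlt, hβpos, hgβ, happrox⟩ :=
      omega_iter hreg hunc next hnext hα
    refine ⟨β, ?_, hαβ⟩
    refine Set.mem_iInter.mpr fun i => (hC i).2.2 β hβlt (ne_of_gt hβpos) ?_
    intro x hx
    obtain ⟨n, hn⟩ := happrox x hx
    refine ⟨nxt i (g n), hnxt1 i _ (hlt n), lt_trans hn (hnxt2 i _ (hlt n)), ?_⟩
    have h1 : nxt i (g n) ≤ next (g n) := le_ciSup (Ordinal.bddAbove_range.{u,u} _) i
    exact lt_of_le_of_lt (h1.trans (le_of_eq (hgs n).symm)) (hgβ (n+1))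
  · intro α hα hα0 happ
    refine Set.mem_iInter.mpr fun i => (hC i).2.2 α hα hα0 ?_
    intro x hx
    obtain ⟨γ, hγ1, hγ2, hγ3⟩ := happ x hx
    exact ⟨γ, Set.mem_iInter.mp hγ1 i, hγ2, hγ3⟩

theorem clubInOrd_inter₂ (hreg : κ.IsRegular) (hunc : ℵ₀ < κ) {C D : Set Ordinal.{u}}
    (hC : ClubInOrd κ.ord C) (hD : ClubInOrd κ.ord D) : ClubInOrd κ.ord (C ∩ D) := by
  have h := clubInOrd_iInter (ι := ULift.{u} Bool) hreg hunc
    (countable_lt_kappa hunc _) (C := fun b => bif b.down then C else D)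
    (fun b => by cases b with | up b => cases b <;> simpa)
  have he : (⋂ b : ULift.{u} Bool, (bif b.down then C else D)) = C ∩ D := by
    ext x
    simp only [Set.mem_iInter, Set.mem_inter_iff]
    constructor
    · intro h; exact ⟨h ⟨true⟩, h ⟨false⟩⟩
    · rintro ⟨h1, h2⟩ ⟨b⟩; cases b <;> simpa
  rwa [he] at h

theorem statInOrd_mono {S1 S2 : Set Ordinal.{u}} (h12 : S1 ⊆ S2) (h2 : S2 ⊆ Set.Iio κ.ord)
    (h : StatInOrd κ.ord S1) : StatInOrd κ.ord S2 :=
  ⟨h2, fun C hC => ((h.2 C hC).mono (Set.inter_subset_inter_left _ h12))⟩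

theorem statInOrd_inter_club (hreg : κ.IsRegular) (hunc : ℵ₀ < κ) {S C : Set Ordinal.{u}}
    (hS : StatInOrd κ.ord S) (hC : ClubInOrd κ.ord C) : StatInOrd κ.ord (S ∩ C) := by
  refine ⟨(Set.inter_subset_left).trans hS.1, fun D hD => ?_⟩
  have := hS.2 _ (clubInOrd_inter₂ hreg hunc hC hD)
  rwa [← Set.inter_assoc] at this

theorem statInOrd_nonempty (hreg : κ.IsRegular) {S : Set Ordinal.{u}}
    (hS : StatInOrd κ.ord S) : S.Nonempty := by
  obtain ⟨δ, hδ, -⟩ := hS.2 _ (clubInOrd_Iio hreg)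
  exact ⟨δ, hδ⟩

theorem stat_pigeon (hreg : κ.IsRegular) (hunc : ℵ₀ < κ) {S : Set Ordinal.{u}}
    (hS : StatInOrd κ.ord S) {ι : Type u} (hι : #ι < κ) (g : Ordinal.{u} → ι) :
    ∃ i, StatInOrd κ.ord {δ ∈ S | g δ = i} := by
  by_contra hcon
  push_neg at hcon
  have hclub : ∀ i : ι, ∃ C, ClubInOrd κ.ord C ∧ {δ ∈ S | g δ = i} ∩ C = ∅ := by
    intro i
    have h1 : {δ ∈ S | g δ = i} ⊆ Set.Iio κ.ord := fun δ hδ => hS.1 hδ.1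
    have h2 := hcon i
    rw [StatInOrd] at h2
    push_neg at h2
    obtain ⟨C, hC, hne⟩ := h2 h1
    exact ⟨C, hC, hne⟩
  choose Cl hCl hempty using hclub
  haveI : Nonempty ι := ⟨g 0⟩
  obtain ⟨δ, hδS, hδC⟩ := hS.2 _ (clubInOrd_iInter hreg hunc hι hCl)
  have : δ ∈ {δ' ∈ S | g δ' = g δ} ∩ Cl (g δ) :=
    ⟨⟨hδS, rfl⟩, Set.mem_iInter.mp hδC (g δ)⟩
  rw [hempty] at this
  exact this

theorem clubInOrd_closurePts (hreg : κ.IsRegular) (hunc : ℵ₀ < κ)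
    (f : Ordinal.{u} → Ordinal.{u}) (hf : ∀ β < κ.ord, f β < κ.ord) :
    ClubInOrd κ.ord {δ | δ < κ.ord ∧ ∀ ε < δ, f ε < δ} := by
  refine ⟨fun δ hδ => hδ.1, ?_, ?_⟩
  · intro α hα
    set next : Ordinal.{u} → Ordinal.{u} := fun β =>
      Order.succ (⨆ z : β.ToType ⊕ PUnit.{u+1},
        Sum.elim (fun x => f ((Ordinal.ToType.mk (o := β)).symm x).1) (fun _ => β) z)
      with hnext_def
    have hcard : ∀ β : Ordinal.{u}, β < κ.ord → #(β.ToType ⊕ PUnit.{u+1}) < κ := by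
      intro β hβ
      rw [Cardinal.mk_sum, Cardinal.lift_id, Cardinal.lift_id]
      exact Cardinal.add_lt_of_lt hreg.aleph0_le
        (by rw [Cardinal.mk_toType]; exact (Cardinal.lt_ord.mp hβ))
        (lt_of_le_of_lt Cardinal.mk_le_aleph0 hunc)
    have hsup_lt : ∀ β < κ.ord, next β < κ.ord := by
      intro β hβ
      have h1 : (⨆ z : β.ToType ⊕ PUnit.{u+1},
          Sum.elim (fun x => f ((Ordinal.ToType.mk (o := β)).symm x).1) (fun _ => β) z) < κ.ord := by
        refine sup_lt_ord' hreg (hcard β hβ) _ ?_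
        rintro (x | x)
        · exact hf _ (lt_trans ((Ordinal.ToType.mk (o := β)).symm x).2 hβ)
        · exact hβ
      exact (ord_limit hreg).succ_lt h1
    have hnext : ∀ β < κ.ord, β < next β ∧ next β < κ.ord := by
      intro β hβ
      refine ⟨?_, hsup_lt β hβ⟩
      have : β ≤ ⨆ z : β.ToType ⊕ PUnit.{u+1},
          Sum.elim (fun x => f ((Ordinal.ToType.mk (o := β)).symm x).1) (fun _ => β) z :=
        le_ciSup (Ordinal.bddAbove_range.{u,u} _) (Sum.inr PUnit.unit)
      exact lt_of_le_of_lt this (Order.lt_succ _)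
    have hdom : ∀ β < κ.ord, ∀ ε < β, f ε < next β := by
      intro β hβ ε hε
      have : f ε ≤ ⨆ z : β.ToType ⊕ PUnit.{u+1},
          Sum.elim (fun x => f ((Ordinal.ToType.mk (o := β)).symm x).1) (fun _ => β) z := by
        have := le_ciSup (Ordinal.bddAbove_range.{u,u}
          (Sum.elim (fun x => f ((Ordinal.ToType.mk (o := β)).symm x).1)
            (fun _ : PUnit.{u+1} => β)))
          (Sum.inl (Ordinal.ToType.mk (o := β) ⟨ε, hε⟩))
        simpa using this
      exact lt_of_le_of_lt this (Order.lt_succ _)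
    obtain ⟨g, β, hgs, hlt, hmono, hαβ, hβlt, hβpos, hgβ, happrox⟩ :=
      omega_iter hreg hunc next hnext hα
    refine ⟨β, ⟨hβlt, ?_⟩, hαβ⟩
    intro ε hε
    obtain ⟨n, hn⟩ := happrox ε hε
    have : f ε < next (g n) := hdom (g n) (hlt n) ε hn
    rw [← hgs n] at this
    exact lt_trans this (hgβ (n+1))
  · intro α hα hα0 happ
    refine ⟨hα, fun ε hε => ?_⟩
    obtain ⟨γ, hγ1, hγ2, hγ3⟩ := happ ε hε
    exact lt_trans (hγ1.2 ε hγ2) hγ3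

theorem clubInOrd_limit (hreg : κ.IsRegular) (hunc : ℵ₀ < κ) :
    ClubInOrd κ.ord {α | α < κ.ord ∧ Order.IsSuccLimit α} := by
  refine ⟨fun δ hδ => hδ.1, ?_, ?_⟩
  · intro α hα
    refine ⟨α + Ordinal.omega0, ⟨?_, Ordinal.isSuccLimit_add α Ordinal.isSuccLimit_omega0⟩, ?_⟩
    · rw [Cardinal.lt_ord, Ordinal.card_add, Ordinal.card_omega0]
      exact Cardinal.add_lt_of_lt hreg.aleph0_le (Cardinal.lt_ord.mp hα) hunc
    · exact (lt_add_iff_pos_right α).mpr Ordinal.omega0_pos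
  · intro α hα hα0 happ
    refine ⟨hα, Ordinal.isSuccLimit_iff.mpr ⟨hα0, Order.isSuccPrelimit_of_succ_lt fun b hb => ?_⟩⟩
    obtain ⟨γ, hγ1, hγ2, hγ3⟩ := happ b hb
    have : Order.succ b ≤ γ := Order.succ_le_of_lt hγ2
    exact lt_of_le_of_lt this hγ3

theorem clubInOrd_diagonal (hreg : κ.IsRegular) (hunc : ℵ₀ < κ)
    (C : Ordinal.{u} → Set Ordinal.{u}) (hC : ∀ γ < κ.ord, ClubInOrd κ.ord (C γ)) :
    ClubInOrd κ.ord {α | α < κ.ord ∧ 0 < α ∧ ∀ γ < α, α ∈ C γ} := by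
  have key : ∀ β < κ.ord, ∃ γ, β < γ ∧ γ < κ.ord ∧ ∀ ε < β, γ ∈ C ε := by
    intro β hβ
    set C' : Option β.ToType → Set Ordinal.{u} := fun z =>
      z.elim (Set.Iio κ.ord) (fun x => C ((Ordinal.ToType.mk (o := β)).symm x).1) with hC'
    have hcard : #(Option β.ToType) < κ := by
      rw [Cardinal.mk_option, Cardinal.mk_toType]
      exact Cardinal.add_lt_of_lt hreg.aleph0_le (Cardinal.lt_ord.mp hβ)
        (lt_trans Cardinal.one_lt_aleph0 hunc)
    have hclub : ∀ z, ClubInOrd κ.ord (C' z) := by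
      rintro (_ | x)
      · exact clubInOrd_Iio hreg
      · exact hC _ (lt_trans ((Ordinal.ToType.mk (o := β)).symm x).2 hβ)
    have := clubInOrd_iInter hreg hunc hcard hclub
    obtain ⟨γ, hγmem, hγgt⟩ := this.2.1 β hβ
    refine ⟨γ, hγgt, Set.mem_iInter.mp hγmem none, ?_⟩
    intro ε hε
    have := Set.mem_iInter.mp hγmem (some (Ordinal.ToType.mk (o := β) ⟨ε, hε⟩))
    simpa [hC'] using this
  choose! nxt h1 h2 h3 using key
  refine ⟨fun δ hδ => hδ.1, ?_, ?_⟩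
  · intro α hα
    have hnext : ∀ β < κ.ord, β < nxt β ∧ nxt β < κ.ord :=
      fun β hβ => ⟨h1 β hβ, h2 β hβ⟩
    obtain ⟨g, β, hgs, hlt, hmonos, hαβ, hβlt, hβpos, hgβ, happrox⟩ :=
      omega_iter hreg hunc nxt hnext hα
    have hmono : ∀ m n, m ≤ n → g m ≤ g n := by
      intro m n h
      exact (strictMono_nat_of_lt_succ hmonos).le_iff_le.mpr h
    refine ⟨β, ⟨hβlt, hβpos, ?_⟩, hαβ⟩
    intro γ hγ
    obtain ⟨n, hn⟩ := happrox γ hγ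
    refine (hC γ (lt_trans hγ hβlt)).2.2 β hβlt (ne_of_gt hβpos) ?_
    intro x hx
    obtain ⟨m, hm⟩ := happrox x hx
    set k := max m n
    have hγk : γ < g k := lt_of_lt_of_le hn (hmono n k (le_max_right m n))
    have hxk : x < g k := lt_of_lt_of_le hm (hmono m k (le_max_left m n))
    refine ⟨nxt (g k), h3 (g k) (hlt k) γ hγk, lt_trans hxk (h1 (g k) (hlt k)), ?_⟩
    rw [← hgs k]
    exact hgβ (k+1)
  · intro α hα hα0 happ
    have hpos : 0 < α := pos_iff_ne_zero.mpr hα0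
    refine ⟨hα, hpos, ?_⟩
    intro γ hγ
    refine (hC γ (lt_trans hγ hα)).2.2 α hα hα0 ?_
    intro x hx
    obtain ⟨δ, hδ1, hδ2, hδ3⟩ := happ (max x γ) (max_lt hx hγ)
    exact ⟨δ, hδ1.2.2 γ (lt_of_le_of_lt (le_max_right x γ) hδ2),
      lt_of_le_of_lt (le_max_left x γ) hδ2, hδ3⟩

theorem fodor (hreg : κ.IsRegular) (hunc : ℵ₀ < κ) {S : Set Ordinal.{u}}
    (hS : StatInOrd κ.ord S) (f : Ordinal.{u} → Ordinal.{u}) (hf : ∀ δ ∈ S, f δ < δ) :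
    ∃ γ, StatInOrd κ.ord {δ ∈ S | f δ = γ} := by
  by_contra hcon
  push_neg at hcon
  have hclub : ∀ γ, ∃ C, ClubInOrd κ.ord C ∧ {δ ∈ S | f δ = γ} ∩ C = ∅ := by
    intro γ
    have h1 : {δ ∈ S | f δ = γ} ⊆ Set.Iio κ.ord := fun δ hδ => hS.1 hδ.1
    have h2 := hcon γ
    rw [StatInOrd] at h2
    push_neg at h2
    obtain ⟨C, hC, hne⟩ := h2 h1
    exact ⟨C, hC, hne⟩
  choose Cl hCl hempty using hclub
  obtain ⟨δ, hδS, hδD⟩ := hS.2 _ (clubInOrd_diagonal hreg hunc Cl (fun γ _ => hCl γ))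
  have h1 : f δ < δ := hf δ hδS
  have h2 : δ ∈ Cl (f δ) := hδD.2.2 _ h1
  have : δ ∈ {δ' ∈ S | f δ' = f δ} ∩ Cl (f δ) := ⟨⟨hδS, rfl⟩, h2⟩
  rw [hempty] at this
  exact this

end Infra


/-! ### Tree-specific auxiliary results -/

noncomputable section TreeAux
open Classical Set

variable {κ : Cardinal.{u}}

theorem mk_pi_lt (hreg : κ.IsRegular) (hunc : ℵ₀ < κ) :
    ∀ (n : ℕ) (ι : Fin n → Type u), (∀ i, #(ι i) < κ) → #(∀ i, ι i) < κ := by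
  intro n
  induction n with
  | zero =>
    intro ι h
    have : #(∀ i : Fin 0, ι i) = 1 := Cardinal.mk_eq_one _
    rw [this]
    exact lt_trans Cardinal.one_lt_aleph0 hunc
  | succ n ih =>
    intro ι h
    have e := (Fin.insertNthEquiv ι 0).symm
    rw [Cardinal.mk_congr e, Cardinal.mk_prod, Cardinal.lift_id, Cardinal.lift_id]
    exact Cardinal.mul_lt_of_lt hreg.aleph0_le (h 0) (ih _ fun i => h _)

section TreeLemmas

variable {T : Type u} [PartialOrder T] {lev : T → Ordinal.{u}}

theorem lev_le_of_le (hT : IsLeveledTree T lev) {s t : T} (h : s ≤ t) : lev s ≤ lev t := by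
  rcases eq_or_lt_of_le h with rfl | h'
  · exact le_rfl
  · exact (hT.2.1 _ _ h').le

theorem eq_of_le_of_lev_le (hT : IsLeveledTree T lev) {s t : T} (h : s ≤ t)
    (h2 : lev t ≤ lev s) : s = t := by
  rcases eq_or_lt_of_le h with rfl | h'
  · rfl
  · exact absurd (hT.2.1 _ _ h') (not_lt.mpr h2)

theorem comparable_of_le (hT : IsLeveledTree T lev) {s s' t : T} (h1 : s ≤ t) (h2 : s' ≤ t) :
    s ≤ s' ∨ s' ≤ s := hT.2.2.1 s s' t h1 h2

/-- The predecessor of `t` at level `α`. -/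
def trace (hT : IsLeveledTree T lev) (t : T) (α : Ordinal.{u}) : T :=
  if h : α < lev t then (hT.2.2.2 t α h).choose else t

theorem trace_le (hT : IsLeveledTree T lev) (t : T) (α : Ordinal.{u}) :
    trace hT t α ≤ t := by
  unfold trace; split
  · exact (hT.2.2.2 t α ‹_›).choose_spec.1
  · exact le_rfl

theorem trace_lev (hT : IsLeveledTree T lev) {t : T} {α : Ordinal.{u}} (h : α ≤ lev t) :
    lev (trace hT t α) = α := by
  unfold trace; split
  · exact (hT.2.2.2 t α ‹_›).choose_spec.2
  · exact le_antisymm (not_lt.mp ‹_›) h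

theorem trace_unique (hT : IsLeveledTree T lev) {s t : T} {α : Ordinal.{u}}
    (hs : s ≤ t) (hlev : lev s = α) : s = trace hT t α := by
  have hα : α ≤ lev t := hlev ▸ lev_le_of_le hT hs
  have h1 : trace hT t α ≤ t := trace_le hT t α
  rcases comparable_of_le hT hs h1 with h | h
  · exact eq_of_le_of_lev_le hT h (by rw [trace_lev hT hα, hlev])
  · exact (eq_of_le_of_lev_le hT h (by rw [trace_lev hT hα, ← hlev])).symm

theorem exists_lt_of_lev_pos (hT : IsLeveledTree T lev) {t : T} (h : 0 < lev t) :
    ∃ s, s < t := by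
  refine ⟨trace hT t 0, lt_of_le_of_ne (trace_le hT t 0) fun he => ?_⟩
  have := trace_lev hT (le_of_lt h : (0 : Ordinal) ≤ lev t)
  rw [he] at this
  exact absurd this.symm (ne_of_lt h)

theorem fodorT (hreg : κ.IsRegular) (hunc : ℵ₀ < κ)
    (hlev : ∀ γ : Ordinal.{u}, #{t : T | lev t = γ} < κ)
    {S : Set Ordinal.{u}} (hS : StatInOrd κ.ord S) (F : Ordinal.{u} → T)
    (hF : ∀ δ ∈ S, lev (F δ) < δ) :
    ∃ t : T, StatInOrd κ.ord {δ ∈ S | F δ = t} := by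
  obtain ⟨γ, hγ⟩ := fodor hreg hunc hS (fun δ => lev (F δ)) hF
  obtain ⟨δ₀, hδ₀⟩ := statInOrd_nonempty hreg hγ
  haveI : Nonempty ↥{t : T | lev t = γ} := ⟨⟨F δ₀, hδ₀.2⟩⟩
  obtain ⟨t, ht⟩ := stat_pigeon hreg hunc hγ (hlev γ)
    (fun δ => if h : lev (F δ) = γ then (⟨F δ, h⟩ : ↥{t : T | lev t = γ})
      else Classical.arbitrary _)
  refine ⟨t.1, statInOrd_mono ?_ (fun δ hδ => hS.1 hδ.1) ht⟩
  rintro δ ⟨⟨hδS, hδγ⟩, hgδ⟩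
  refine ⟨hδS, ?_⟩
  rw [dif_pos hδγ] at hgδ
  exact congrArg Subtype.val hgδ

theorem fodorT_fin (hreg : κ.IsRegular) (hunc : ℵ₀ < κ)
    (hlev : ∀ γ : Ordinal.{u}, #{t : T | lev t = γ} < κ) :
    ∀ (m : ℕ) {S : Set Ordinal.{u}}, StatInOrd κ.ord S →
      ∀ F : Ordinal.{u} → Fin m → T, (∀ δ ∈ S, ∀ i, lev (F δ i) < δ) →
      ∃ g : Fin m → T, StatInOrd κ.ord {δ ∈ S | ∀ i, F δ i = g i} := by
  intro m
  induction m with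
  | zero =>
    intro S hS F hF
    refine ⟨fun i => i.elim0, ?_⟩
    have he : {δ ∈ S | ∀ i : Fin 0, F δ i = i.elim0} = S := by
      ext δ
      simp only [Set.mem_setOf_eq, and_iff_left_iff_imp]
      exact fun _ i => i.elim0
    rwa [he]
  | succ n ih =>
    intro S hS F hF
    obtain ⟨g', hg'⟩ := ih hS (fun δ i => F δ i.succ) (fun δ hδ i => hF δ hδ i.succ)
    obtain ⟨t, ht⟩ := fodorT hreg hunc hlev hg' (fun δ => F δ 0)
      (fun δ hδ => hF δ hδ.1 0)
    refine ⟨Fin.cons t g', statInOrd_mono ?_ (fun δ hδ => hS.1 hδ.1) ht⟩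
    rintro δ ⟨⟨hδS, hrest⟩, h0⟩
    refine ⟨hδS, fun i => ?_⟩
    refine Fin.cases ?_ ?_ i
    · simpa using h0
    · intro j; simpa using hrest j

end TreeLemmas

theorem clubInOrd_Ioi (hreg : κ.IsRegular) {α : Ordinal.{u}} (hα : α < κ.ord) :
    ClubInOrd κ.ord {β | α < β ∧ β < κ.ord} := by
  have ho := ord_limit hreg
  refine ⟨fun β hβ => hβ.2, ?_, ?_⟩
  · intro x hx
    have h1 : max α x + 1 < κ.ord := by
      rw [Ordinal.add_one_eq_succ]; exact ho.succ_lt (max_lt hα hx)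
    refine ⟨max α x + 1, ⟨?_, h1⟩, ?_⟩
    · rw [Ordinal.add_one_eq_succ]
      exact lt_of_le_of_lt (le_max_left α x) (Order.lt_succ _)
    · rw [Ordinal.add_one_eq_succ]
      exact lt_of_le_of_lt (le_max_right α x) (Order.lt_succ _)
  · intro β hβ hβ0 happ
    obtain ⟨γ, hγ1, hγ2, hγ3⟩ := happ 0 (pos_iff_ne_zero.mpr hβ0)
    exact ⟨lt_trans hγ1.1 hγ3, hβ⟩

end TreeAux

/-- if T is a κ-Aronszajn tree that does not split at limit levels and some
stationary subset of κ is nonstationary with respect to T, then ℙ(T) is κ-Knaster. -/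
theorem stmt_14 (κ : Cardinal.{u}) (hreg : κ.IsRegular) (hunc : ℵ₀ < κ)
    (T : Type u) [PartialOrder T] (lev : T → Ordinal.{u})
    (haron : Aronszajn κ T lev) (hnosplit : NoSplitAtLimits T lev)
    (S : Set Ordinal.{u}) (hstat : StatInOrd κ.ord S) (hns : NonstatWrt κ T lev S) :
    Knaster κ (SpecCond T) := by
  classical
  obtain ⟨hT, hH, hlevsm, -⟩ := haron
  obtain ⟨rr, hrr, hcolor⟩ := hns
  choose μt hμlt ct hct using hcolor
  have ho : Order.IsSuccLimit (κ.ord) := ord_limit hreg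
  intro A hA
  have h0o : (0 : Ordinal.{u}) < κ.ord := by
    rw [Cardinal.lt_ord, Ordinal.card_zero]; exact hreg.pos
  obtain ⟨t0, ht0⟩ := hH.2 0 h0o
  have hmkA : #(κ.ord.ToType) = #↥A := by rw [Cardinal.mk_toType, Cardinal.card_ord, hA]
  obtain ⟨e⟩ := Cardinal.eq.mp hmkA
  set pc : Ordinal.{u} → SpecCond T := fun δ =>
    if h : δ < κ.ord then ((e ((Ordinal.ToType.mk (o := κ.ord)) ⟨δ, Set.mem_Iio.mpr h⟩)) : SpecCond T)
    else (⟨∅, ⟨fun p hp => absurd hp (Finset.notMem_empty p),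
      fun p hp => absurd hp (Finset.notMem_empty p)⟩⟩ : SpecCond T) with hpc
  have hpcA : ∀ δ, δ < κ.ord → (pc δ : SpecCond T) ∈ A := by
    intro δ h
    have hd : pc δ = (e (Ordinal.ToType.mk (o := κ.ord) ⟨δ, Set.mem_Iio.mpr h⟩) : SpecCond T) :=
      dif_pos h
    rw [hd]; exact (e _).2
  have hpcinj : ∀ δ1, δ1 < κ.ord → ∀ δ2, δ2 < κ.ord → pc δ1 = pc δ2 → δ1 = δ2 := by
    intro δ1 h1 δ2 h2 heq
    have hd1 : pc δ1 = (e (Ordinal.ToType.mk (o := κ.ord) ⟨δ1, Set.mem_Iio.mpr h1⟩) : SpecCond T) :=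
      dif_pos h1
    have hd2 : pc δ2 = (e (Ordinal.ToType.mk (o := κ.ord) ⟨δ2, Set.mem_Iio.mpr h2⟩) : SpecCond T) :=
      dif_pos h2
    rw [hd1, hd2] at heq
    have h3 := e.injective (Subtype.ext heq)
    have h4 := (Ordinal.ToType.mk (o := κ.ord)).injective h3
    exact congrArg Subtype.val h4
  set Lp : Ordinal.{u} → Finset (T × ℕ) :=
    fun δ => (pc δ).1.filter (fun z => lev z.1 < δ) with hLp
  set Hp : Ordinal.{u} → Finset (T × ℕ) :=
    fun δ => (pc δ).1.filter (fun z => ¬ lev z.1 < δ) with hHp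
  have hLpmem : ∀ δ z, z ∈ Lp δ → z ∈ (pc δ).1 ∧ lev z.1 < δ := by
    intro δ z hz; rw [hLp] at hz; exact Finset.mem_filter.mp hz
  have hLpintro : ∀ δ z, z ∈ (pc δ).1 → lev z.1 < δ → z ∈ Lp δ := by
    intro δ z h1 h2; rw [hLp]; exact Finset.mem_filter.mpr ⟨h1, h2⟩
  have hHpmem : ∀ δ z, z ∈ Hp δ → z ∈ (pc δ).1 ∧ δ ≤ lev z.1 := by
    intro δ z hz; rw [hHp] at hz
    have := Finset.mem_filter.mp hz; exact ⟨this.1, not_lt.mp this.2⟩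
  have hsplit : ∀ δ z, z ∈ (pc δ).1 → z ∈ Lp δ ∨ z ∈ Hp δ := by
    intro δ z hz
    by_cases h : lev z.1 < δ
    · exact Or.inl (by rw [hLp]; exact Finset.mem_filter.mpr ⟨hz, h⟩)
    · exact Or.inr (by rw [hHp]; exact Finset.mem_filter.mpr ⟨hz, h⟩)
  have hS0 : StatInOrd κ.ord (S ∩ {α | α < κ.ord ∧ Order.IsSuccLimit α}) :=
    statInOrd_inter_club hreg hunc hstat (clubInOrd_limit hreg hunc)
  obtain ⟨mn, hS1⟩ := stat_pigeon hreg hunc hS0 (countable_lt_kappa hunc (ULift.{u} (ℕ × ℕ)))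
    (fun δ => ULift.up ((Lp δ).card, (Hp δ).card))
  have hcard : ∀ δ, (ULift.up.{u} ((Lp δ).card, (Hp δ).card) : ULift.{u} (ℕ × ℕ)) = mn →
      (Lp δ).card = mn.down.1 ∧ (Hp δ).card = mn.down.2 :=
    fun δ h => ⟨congrArg (fun x => x.down.1) h, congrArg (fun x => x.down.2) h⟩
  set FL : Ordinal.{u} → Fin mn.down.1 → T × ℕ := fun δ i =>
    if h : (Lp δ).card = mn.down.1 then
      (((Fintype.equivFinOfCardEq (n := mn.down.1) (α := ↥(Lp δ))
        (by rw [Fintype.card_coe]; exact h)).symm i : ↥(Lp δ)) : T × ℕ)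
    else (t0, 0) with hFL
  have hFLmem : ∀ δ, (Lp δ).card = mn.down.1 → ∀ i, FL δ i ∈ Lp δ := by
    intro δ h i; rw [hFL]; simp only [dif_pos h]; exact Finset.coe_mem _
  have hFLsurj : ∀ δ, (Lp δ).card = mn.down.1 → ∀ x ∈ Lp δ, ∃ i, FL δ i = x := by
    intro δ h x hx
    refine ⟨(Fintype.equivFinOfCardEq (n := mn.down.1) (α := ↥(Lp δ))
      (by rw [Fintype.card_coe]; exact h)) ⟨x, hx⟩, ?_⟩
    rw [hFL]; simp only [dif_pos h, Equiv.symm_apply_apply]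
  obtain ⟨gL, hS2⟩ := fodorT_fin hreg hunc hlevsm mn.down.1 hS1
    (fun δ i => (FL δ i).1) (by
      rintro δ ⟨hδ0, hδc⟩ i
      exact (hLpmem δ _ (hFLmem δ (hcard δ hδc).1 i)).2)
  obtain ⟨vL, hS3⟩ := stat_pigeon hreg hunc hS2
    (countable_lt_kappa hunc (ULift.{u} (Fin mn.down.1 → ℕ)))
    (fun δ => ULift.up (fun i => (FL δ i).2))
  set FH : Ordinal.{u} → Fin mn.down.2 → T × ℕ := fun δ i =>
    if h : (Hp δ).card = mn.down.2 then
      (((Fintype.equivFinOfCardEq (n := mn.down.2) (α := ↥(Hp δ))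
        (by rw [Fintype.card_coe]; exact h)).symm i : ↥(Hp δ)) : T × ℕ)
    else (t0, 0) with hFH
  have hFHmem : ∀ δ, (Hp δ).card = mn.down.2 → ∀ i, FH δ i ∈ Hp δ := by
    intro δ h i; rw [hFH]; simp only [dif_pos h]; exact Finset.coe_mem _
  have hFHsurj : ∀ δ, (Hp δ).card = mn.down.2 → ∀ x ∈ Hp δ, ∃ i, FH δ i = x := by
    intro δ h x hx
    refine ⟨(Fintype.equivFinOfCardEq (n := mn.down.2) (α := ↥(Hp δ))
      (by rw [Fintype.card_coe]; exact h)) ⟨x, hx⟩, ?_⟩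
    rw [hFH]; simp only [dif_pos h, Equiv.symm_apply_apply]
  obtain ⟨vH, hS4⟩ := stat_pigeon hreg hunc hS3
    (countable_lt_kappa hunc (ULift.{u} (Fin mn.down.2 → ℕ)))
    (fun δ => ULift.up (fun i => (FH δ i).2))
  set uu : Ordinal.{u} → Fin mn.down.2 → T := fun δ i => trace hT (FH δ i).1 δ with huu
  have huu_facts : ∀ δ, (Hp δ).card = mn.down.2 → δ ∈ S → δ < κ.ord → Order.IsSuccLimit δ →
      ∀ i, uu δ i ≤ (FH δ i).1 ∧ lev (uu δ i) = δ ∧ lev (rr (uu δ i)) < δ := by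
    intro δ hc hδS hδo hδlim i
    have hmem := hHpmem δ _ (hFHmem δ hc i)
    have h1 : uu δ i ≤ (FH δ i).1 := trace_le hT _ _
    have h2 : lev (uu δ i) = δ := trace_lev hT hmem.2
    have hpos : (0 : Ordinal.{u}) < lev (uu δ i) := by rw [h2]; exact hδlim.pos
    have h3 : rr (uu δ i) < uu δ i :=
      hrr _ (by rw [h2]; exact hδS) (exists_lt_of_lev_pos hT hpos)
    have h4 := hT.2.1 _ _ h3
    rw [h2] at h4
    exact ⟨h1, h2, h4⟩
  obtain ⟨sv, hS5⟩ := fodorT_fin hreg hunc hlevsm mn.down.2 hS4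
    (fun δ i => rr (uu δ i)) (by
      rintro δ ⟨⟨⟨⟨⟨hδS, hδo, hδlim⟩, hδc⟩, -⟩, -⟩, -⟩ i
      exact (huu_facts δ (hcard δ hδc).2 hδS hδo hδlim i).2.2)
  obtain ⟨kv, hS6⟩ := stat_pigeon hreg hunc hS5
    (mk_pi_lt hreg hunc mn.down.2 (fun i => ((μt (sv i)).ord.ToType))
      (fun i => by rw [Cardinal.mk_toType, Cardinal.card_ord]; exact hμlt _))
    (fun δ => (fun i => ct (sv i) (uu δ i)))
  obtain ⟨Eb, hS7⟩ := stat_pigeon hreg hunc hS6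
    (countable_lt_kappa hunc (ULift.{u} (Fin mn.down.2 → Fin mn.down.2 → Bool)))
    (fun δ => ULift.up (fun i j => if uu δ i = uu δ j then true else false))
  set Wp : Ordinal.{u} → Fin mn.down.2 × Fin mn.down.2 → T × T := fun δ p =>
    if h : lev (uu δ p.1) = lev (uu δ p.2) ∧ Order.IsSuccLimit (lev (uu δ p.1)) ∧ uu δ p.1 ≠ uu δ p.2 then
      ((hnosplit (uu δ p.1) (uu δ p.2) h.1 h.2.1 h.2.2).choose,
        (hnosplit (uu δ p.1) (uu δ p.2) h.1 h.2.1 h.2.2).choose_spec.choose)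
    else (trace hT (uu δ p.1) 0, trace hT (uu δ p.1) 0) with hWp
  have hWspec : ∀ δ p,
      (lev (uu δ p.1) = lev (uu δ p.2) ∧ Order.IsSuccLimit (lev (uu δ p.1)) ∧ uu δ p.1 ≠ uu δ p.2) →
      lev (Wp δ p).1 = lev (Wp δ p).2 ∧ lev (Wp δ p).1 < lev (uu δ p.1) ∧
      (Wp δ p).1 ≠ (Wp δ p).2 ∧ (Wp δ p).1 < uu δ p.1 ∧ (Wp δ p).2 < uu δ p.2 := by
    intro δ p h
    rw [hWp]; simp only [dif_pos h]
    exact (hnosplit (uu δ p.1) (uu δ p.2) h.1 h.2.1 h.2.2).choose_spec.choose_spec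
  have hWreg : ∀ δ, (Hp δ).card = mn.down.2 → δ ∈ S → δ < κ.ord → Order.IsSuccLimit δ →
      ∀ p : Fin mn.down.2 × Fin mn.down.2, lev (Wp δ p).1 < δ ∧ lev (Wp δ p).2 < δ := by
    intro δ hc hδS hδo hδlim p
    have hu1 := (huu_facts δ hc hδS hδo hδlim p.1).2.1
    by_cases h : lev (uu δ p.1) = lev (uu δ p.2) ∧ Order.IsSuccLimit (lev (uu δ p.1)) ∧
        uu δ p.1 ≠ uu δ p.2
    · have hs := hWspec δ p h
      have h1 : lev (Wp δ p).1 < δ := by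
        have h2 := hs.2.1; rwa [hu1] at h2
      exact ⟨h1, by rw [← hs.1]; exact h1⟩
    · have h0 : lev (trace hT (uu δ p.1) 0) = 0 := trace_lev hT zero_le
      rw [hWp]; simp only [dif_neg h]
      exact ⟨by rw [h0]; exact hδlim.pos, by rw [h0]; exact hδlim.pos⟩
  obtain ⟨w0, hS8a⟩ := fodorT_fin hreg hunc hlevsm (mn.down.2 * mn.down.2) hS7
    (fun δ q => (Wp δ (finProdFinEquiv.symm q)).1) (by
      rintro δ ⟨⟨⟨⟨⟨⟨⟨⟨hδS, hδo, hδlim⟩, hδc⟩, -⟩, -⟩, -⟩, -⟩, -⟩, -⟩ q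
      exact (hWreg δ (hcard δ hδc).2 hδS hδo hδlim _).1)
  obtain ⟨w1, hS8⟩ := fodorT_fin hreg hunc hlevsm (mn.down.2 * mn.down.2) hS8a
    (fun δ q => (Wp δ (finProdFinEquiv.symm q)).2) (by
      rintro δ ⟨⟨⟨⟨⟨⟨⟨⟨⟨hδS, hδo, hδlim⟩, hδc⟩, -⟩, -⟩, -⟩, -⟩, -⟩, -⟩, -⟩ q
      exact (hWreg δ (hcard δ hδc).2 hδS hδo hδlim _).2)
  set ℓf : Ordinal.{u} → Ordinal.{u} := fun δ => (Hp δ).sup (fun z => lev z.1 + 1) with hℓf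
  have hℓlt : ∀ β, β < κ.ord → ℓf β < κ.ord := by
    intro β hβ
    rw [hℓf]
    refine (Finset.sup_lt_iff (by rw [Ordinal.bot_eq_zero]; exact h0o)).mpr ?_
    intro z hz; rw [Ordinal.add_one_eq_succ]; exact ho.succ_lt (hH.1 z.1)
  have hℓmem : ∀ δ z, z ∈ Hp δ → lev z.1 < ℓf δ := by
    intro δ z hz
    rw [hℓf]
    exact lt_of_lt_of_le (by rw [Ordinal.add_one_eq_succ]; exact Order.lt_succ _)
      (Finset.le_sup hz)
  have hD := clubInOrd_closurePts hreg hunc ℓf hℓlt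
  obtain ⟨Wset, hWstat, hWprop⟩ :
      ∃ Wset : Set Ordinal.{u}, StatInOrd κ.ord Wset ∧ ∀ δ ∈ Wset,
        δ ∈ S ∧ δ < κ.ord ∧ Order.IsSuccLimit δ ∧
        (Lp δ).card = mn.down.1 ∧ (Hp δ).card = mn.down.2 ∧
        (∀ i, (FL δ i).1 = gL i) ∧ (∀ i, (FL δ i).2 = vL.down i) ∧
        (∀ i, (FH δ i).2 = vH.down i) ∧ (∀ i, rr (uu δ i) = sv i) ∧
        (∀ i, ct (sv i) (uu δ i) = kv i) ∧
        (∀ i j, (if uu δ i = uu δ j then true else false) = Eb.down i j) ∧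
        (∀ p, (Wp δ p).1 = w0 (finProdFinEquiv p)) ∧
        (∀ p, (Wp δ p).2 = w1 (finProdFinEquiv p)) ∧
        (∀ ε, ε < δ → ℓf ε < δ) := by
    refine ⟨_, statInOrd_inter_club hreg hunc hS8 hD, ?_⟩
    rintro δ ⟨⟨⟨⟨⟨⟨⟨⟨⟨⟨⟨hδS, hδo, hδlim⟩, hδc⟩, hgL⟩, hvL⟩, hvH⟩, hsv⟩, hkv⟩, hEb⟩,
      hw0⟩, hw1⟩, hDm⟩
    exact ⟨hδS, hδo, hδlim, (hcard δ hδc).1, (hcard δ hδc).2, hgL,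
      fun i => congrFun (congrArg ULift.down hvL) i,
      fun i => congrFun (congrArg ULift.down hvH) i,
      hsv,
      fun i => congrFun hkv i,
      fun i j => congrFun (congrFun (congrArg ULift.down hEb) i) j,
      fun p => by have := hw0 (finProdFinEquiv p); rwa [Equiv.symm_apply_apply] at this,
      fun p => by have := hw1 (finProdFinEquiv p); rwa [Equiv.symm_apply_apply] at this,
      hDm.2⟩
  have hWub : ∀ α, α < κ.ord → ∃ w ∈ Wset, α < w := by
    intro α hα
    obtain ⟨w, hw1, hw2⟩ := hWstat.2 _ (clubInOrd_Ioi hreg hα)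
    exact ⟨w, hw1, hw2.1⟩
  set W' : Set (κ.ord.ToType) :=
    {x | (((Ordinal.ToType.mk (o := κ.ord)).symm x).1 : Ordinal.{u}) ∈ Wset} with hW'
  have hmem' : ∀ w (hw : w ∈ Wset), Ordinal.ToType.mk (o := κ.ord) ⟨w, hWstat.1 hw⟩ ∈ W' := by
    intro w hw
    rw [hW']; simp only [Set.mem_setOf_eq, OrderIso.symm_apply_apply]; exact hw
  have hk1 : κ ≤ #↥W' := by
    by_contra hlt
    push_neg at hlt
    have hsup : (⨆ x : ↥W', ((Ordinal.ToType.mk (o := κ.ord)).symm x.1).1) < κ.ord :=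
      sup_lt_ord' hreg hlt _ (fun x => ((Ordinal.ToType.mk (o := κ.ord)).symm x.1).2)
    obtain ⟨w, hw, hwgt⟩ := hWub _ hsup
    have hx := hmem' w hw
    have hle : w ≤ ⨆ x : ↥W', ((Ordinal.ToType.mk (o := κ.ord)).symm x.1).1 := by
      have h2 := le_ciSup (Ordinal.bddAbove_range.{u,u}
        (fun x : ↥W' => ((Ordinal.ToType.mk (o := κ.ord)).symm x.1).1)) (⟨_, hx⟩ : ↥W')
      simpa using h2
    exact absurd hle (not_le.mpr hwgt)
  have hk2 : #↥W' ≤ κ := by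
    have := Cardinal.mk_set_le W'
    rwa [Cardinal.mk_toType, Cardinal.card_ord] at this
  have main : ∀ δ ∈ Wset, ∀ δ' ∈ Wset, δ < δ' → Compat (pc δ) (pc δ') := by
    intro δ hδ δ' hδ' hlt
    obtain ⟨hδS, hδo, hδlim, hδcL, hδcH, hδgL, hδvL, hδvH, hδsv, hδkv, hδEb, hδw0, hδw1,
      hδcl⟩ := hWprop δ hδ
    obtain ⟨hδ'S, hδ'o, hδ'lim, hδ'cL, hδ'cH, hδ'gL, hδ'vL, hδ'vH, hδ'sv, hδ'kv, hδ'Eb,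
      hδ'w0, hδ'w1, hδ'cl⟩ := hWprop δ' hδ'
    have hLR : Lp δ = Lp δ' := by
      have h1 : ∀ δ0, (Lp δ0).card = mn.down.1 → (∀ i, (FL δ0 i).1 = gL i) →
          (∀ i, (FL δ0 i).2 = vL.down i) →
          Lp δ0 = Finset.image (fun i => (gL i, vL.down i)) Finset.univ := by
        intro δ0 hc hn hv
        ext x
        simp only [Finset.mem_image, Finset.mem_univ, true_and]
        constructor
        · intro hx
          obtain ⟨i, hi⟩ := hFLsurj δ0 hc x hx
          exact ⟨i, by rw [← hn i, ← hv i, Prod.mk.eta, hi]⟩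
        · rintro ⟨i, rfl⟩
          have := hFLmem δ0 hc i
          rwa [← hn i, ← hv i, Prod.mk.eta]
      rw [h1 δ hδcL hδgL hδvL, h1 δ' hδ'cL hδ'gL hδ'vL]
    have hHlev' : ∀ z ∈ Hp δ, lev z.1 < δ' := fun z hz =>
      lt_trans (hℓmem δ z hz) (hδ'cl δ hlt)
    have key1 : ∀ x ∈ (pc δ).1, ∀ y ∈ (pc δ').1, (x : T × ℕ).1 = (y : T × ℕ).1 → x = y := by
      intro x hx y hy hxy
      rcases hsplit δ x hx with hxL | hxH
      · exact (pc δ').2.1 x (hLpmem δ' x (hLR ▸ hxL)).1 y hy hxy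
      · have hylev : lev y.1 < δ' := hxy ▸ hHlev' x hxH
        have hyL : y ∈ Lp δ' := hLpintro δ' y hy hylev
        exact (pc δ).2.1 x (hHpmem δ x hxH).1 y (hLpmem δ y (hLR ▸ hyL)).1 hxy
    have key2 : ∀ x ∈ (pc δ).1, ∀ y ∈ (pc δ').1,
        ((x : T × ℕ).1 ≤ (y : T × ℕ).1 ∨ (y : T × ℕ).1 ≤ (x : T × ℕ).1) →
        (x : T × ℕ).2 = (y : T × ℕ).2 → x = y := by
      intro x hx y hy hcomp hval
      rcases hsplit δ x hx with hxL | hxH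
      · exact (pc δ').2.2 x (hLpmem δ' x (hLR ▸ hxL)).1 y hy hcomp hval
      · by_cases hylev : lev y.1 < δ'
        · have hyL : y ∈ Lp δ' := hLpintro δ' y hy hylev
          exact (pc δ).2.2 x (hHpmem δ x hxH).1 y (hLpmem δ y (hLR ▸ hyL)).1 hcomp hval
        · exfalso
          have hyH : y ∈ Hp δ' := by rw [hHp]; exact Finset.mem_filter.mpr ⟨hy, hylev⟩
          have hyP := hHpmem δ' y hyH
          have hxlt' : lev x.1 < δ' := hHlev' x hxH
          have hnode : x.1 ≠ y.1 := fun h => absurd hyP.2 (not_le.mpr (h ▸ hxlt'))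
          have hxy : x.1 < y.1 := by
            rcases hcomp with h | h
            · exact lt_of_le_of_ne h hnode
            · exact absurd (le_trans hyP.2 (lev_le_of_le hT h)) (not_le.mpr hxlt')
          obtain ⟨i, hi⟩ := hFHsurj δ hδcH x hxH
          obtain ⟨j, hj⟩ := hFHsurj δ' hδ'cH y hyH
          have hufδ := huu_facts δ hδcH hδS hδo hδlim
          have hufδ' := huu_facts δ' hδ'cH hδ'S hδ'o hδ'lim
          have hulev : lev (uu δ i) = δ := (hufδ i).2.1
          have hwlev : lev (uu δ' j) = δ' := (hufδ' j).2.1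
          have huy : uu δ i ≤ y.1 := by
            have h2 := (hufδ i).1
            rw [hi] at h2
            exact le_trans h2 (le_of_lt hxy)
          have hwy : uu δ' j ≤ y.1 := by
            have h2 := (hufδ' j).1
            rwa [hj] at h2
          have huw : uu δ i < uu δ' j := by
            rcases comparable_of_le hT huy hwy with h | h
            · refine lt_of_le_of_ne h fun he => ?_
              rw [he, hwlev] at hulev
              exact absurd hulev (ne_of_gt hlt)
            · have h2 := lev_le_of_le hT h
              rw [hulev, hwlev] at h2
              exact absurd h2 (not_le.mpr hlt)
          by_cases hEtt : Eb.down i j = true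
          · have heqδ' : uu δ' i = uu δ' j := by
              have h11 := hδ'Eb i j
              rw [hEtt] at h11
              by_contra hne
              rw [if_neg hne] at h11
              exact Bool.false_ne_true h11
            have hru : rr (uu δ i) = sv i := hδsv i
            have hrw : rr (uu δ' j) = sv i := by rw [← heqδ']; exact hδ'sv i
            have hcu : ct (sv i) (uu δ i) = kv i := hδkv i
            have hcw : ct (sv i) (uu δ' j) = kv i := by rw [← heqδ']; exact hδ'kv i
            have hSu : lev (uu δ i) ∈ S := by rw [hulev]; exact hδS
            have hSw : lev (uu δ' j) ∈ S := by rw [hwlev]; exact hδ'S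
            have heq := hct (sv i) (uu δ i) (uu δ' j) hSu hSw hru hrw (le_of_lt huw)
              (hcu.trans hcw.symm)
            rw [heq] at huw
            exact lt_irrefl _ huw
          · have hEff : Eb.down i j = false := by
              revert hEtt; cases (Eb.down i j) <;> simp
            have hneδ : uu δ i ≠ uu δ j := by
              intro he
              have h11 := hδEb i j
              rw [if_pos he, hEff] at h11
              exact Bool.noConfusion h11
            have hneδ' : uu δ' i ≠ uu δ' j := by
              intro he
              have h11 := hδ'Eb i j
              rw [if_pos he, hEff] at h11
              exact Bool.noConfusion h11
            have hcondδ : lev (uu δ i) = lev (uu δ j) ∧ Order.IsSuccLimit (lev (uu δ i)) ∧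
                uu δ i ≠ uu δ j :=
              ⟨by rw [hulev, (hufδ j).2.1], by rw [hulev]; exact hδlim, hneδ⟩
            have hcondδ' : lev (uu δ' i) = lev (uu δ' j) ∧ Order.IsSuccLimit (lev (uu δ' i)) ∧
                uu δ' i ≠ uu δ' j :=
              ⟨by rw [(hufδ' i).2.1, (hufδ' j).2.1], by rw [(hufδ' i).2.1]; exact hδ'lim, hneδ'⟩
            have hwsδ := hWspec δ (i, j) hcondδ
            have hwsδ' := hWspec δ' (i, j) hcondδ'
            have hab : w0 (finProdFinEquiv (i, j)) ≠ w1 (finProdFinEquiv (i, j)) := by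
              rw [← hδw0 (i, j), ← hδw1 (i, j)]; exact hwsδ.2.2.1
            have hlev_ab : lev (w0 (finProdFinEquiv (i, j))) =
                lev (w1 (finProdFinEquiv (i, j))) := by
              rw [← hδw0 (i, j), ← hδw1 (i, j)]; exact hwsδ.1
            have hau : w0 (finProdFinEquiv (i, j)) < uu δ i := by
              rw [← hδw0 (i, j)]; exact hwsδ.2.2.2.1
            have hbw : w1 (finProdFinEquiv (i, j)) < uu δ' j := by
              rw [← hδ'w1 (i, j)]; exact hwsδ'.2.2.2.2
            have haw : w0 (finProdFinEquiv (i, j)) < uu δ' j := lt_trans hau huw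
            rcases comparable_of_le hT (le_of_lt haw) (le_of_lt hbw) with h | h
            · exact hab (eq_of_le_of_lev_le hT h (le_of_eq hlev_ab.symm))
            · exact hab (eq_of_le_of_lev_le hT h (le_of_eq hlev_ab)).symm
    refine ⟨⟨(pc δ).1 ∪ (pc δ').1, ⟨?_, ?_⟩⟩, ?_, ?_⟩
    · intro x hx y hy hxy
      rcases Finset.mem_union.mp hx with hx' | hx' <;>
        rcases Finset.mem_union.mp hy with hy' | hy'
      · exact (pc δ).2.1 x hx' y hy' hxy
      · exact key1 x hx' y hy' hxy
      · exact (key1 y hy' x hx' hxy.symm).symm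
      · exact (pc δ').2.1 x hx' y hy' hxy
    · intro x hx y hy hcomp hval
      rcases Finset.mem_union.mp hx with hx' | hx' <;>
        rcases Finset.mem_union.mp hy with hy' | hy'
      · exact (pc δ).2.2 x hx' y hy' hcomp hval
      · exact key2 x hx' y hy' hcomp hval
      · exact (key2 y hy' x hx' hcomp.symm hval.symm).symm
      · exact (pc δ').2.2 x hx' y hy' hcomp hval
    · exact Finset.subset_union_left
    · exact Finset.subset_union_right
  refine ⟨pc '' Wset, ?_, ?_, ?_⟩
  · rintro p ⟨w, hw, rfl⟩; exact hpcA w (hWstat.1 hw)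
  · have hinj : Set.InjOn
        (fun x : κ.ord.ToType => pc ((Ordinal.ToType.mk (o := κ.ord)).symm x).1) W' := by
      intro x hx y hy hxy
      have h1 := hpcinj _ ((Ordinal.ToType.mk (o := κ.ord)).symm x).2 _
        ((Ordinal.ToType.mk (o := κ.ord)).symm y).2 hxy
      have h2 : (Ordinal.ToType.mk (o := κ.ord)).symm x = (Ordinal.ToType.mk (o := κ.ord)).symm y :=
        Subtype.ext h1
      exact (Ordinal.ToType.mk (o := κ.ord)).symm.injective h2
    have himg : pc '' Wset =
        (fun x : κ.ord.ToType => pc ((Ordinal.ToType.mk (o := κ.ord)).symm x).1) '' W' := by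
      ext p
      constructor
      · rintro ⟨w, hw, rfl⟩
        refine ⟨_, hmem' w hw, ?_⟩
        simp only [OrderIso.symm_apply_apply]
      · rintro ⟨x, hx, rfl⟩
        exact ⟨_, hx, rfl⟩
    rw [himg, Cardinal.mk_image_eq_of_injOn _ _ hinj]
    exact le_antisymm hk2 hk1
  · intro p hp q hq
    obtain ⟨δ1, hδ1, rfl⟩ := hp
    obtain ⟨δ2, hδ2, rfl⟩ := hq
    rcases lt_trichotomy δ1 δ2 with h | h | h
    · exact main δ1 hδ1 δ2 hδ2 h
    · rw [h]; exact ⟨pc δ2, le_refl _, le_refl _⟩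
    · obtain ⟨r, h1, h2⟩ := main δ2 hδ2 δ1 hδ1 h
      exact ⟨r, h2, h1⟩


end Layered
end

section
/- Let κ be an uncountable regular cardinal and C⃗ = ⟨C_α : α < κ⟩ a C-sequence that avoids a set S ⊆ κ. Then S is nonstationary with respect to the tree T(ρ₀^{C⃗}) of full codes of walks through C⃗. -/
universe u v

open Cardinal

namespace Layered

variable {P : Type u}

section Stmt15

open Classical in
/-- The order type of a set of ordinals. -/
noncomputable def setOtp (s : Set Ordinal.{u}) : Ordinal.{u} :=
  if h : Small.{u} s then
    @Ordinal.type (@Shrink s h)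
      (fun a b => ((@equivShrink s h).symm a).1 < ((@equivShrink s h).symm b).1)
      (RelEmbedding.isWellOrder
        ⟨⟨fun a => ((@equivShrink s h).symm a).1,
          fun a b hab => (@equivShrink s h).symm.injective (Subtype.val_injective hab)⟩,
          Iff.rfl⟩)
  else 0

/-- The full code `ρ₀(α, β)` of the walk from `β` to `α` through the C-sequence `C`. -/
noncomputable def rho0 (C : Ordinal.{u} → Set Ordinal.{u}) (α : Ordinal.{u}) :
    Ordinal.{u} → List Ordinal.{u} :=
  WellFounded.fix wellFounded_lt fun β ih =>
    if h : α < β ∧ sInf (C β ∩ {x | α ≤ x}) < β then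
      setOtp (C β ∩ Set.Iio α) :: ih (sInf (C β ∩ {x | α ≤ x})) h.2
    else []

/-- The node `ρ₀(·, β) ↾ α` of the tree of full codes, coded by its graph. -/
def walkNode (C : Ordinal.{u} → Set Ordinal.{u}) (α β : Ordinal.{u}) :
    Set (Ordinal.{u} × List Ordinal.{u}) :=
  {p | p.1 < α ∧ p.2 = rho0 C p.1 β}

/-- The tree `T(ρ₀)` of all restrictions `ρ₀(·, β) ↾ α` for `α ≤ β < o`,
ordered by inclusion. -/
def WalkTree (C : Ordinal.{u} → Set Ordinal.{u}) (o : Ordinal.{u}) : Type (u + 1) :=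
  {t : Set (Ordinal.{u} × List Ordinal.{u}) // ∃ α β, α ≤ β ∧ β < o ∧ t = walkNode C α β}

noncomputable instance (C : Ordinal.{u} → Set Ordinal.{u}) (o : Ordinal.{u}) :
    PartialOrder (WalkTree C o) :=
  inferInstanceAs (PartialOrder
    {t : Set (Ordinal.{u} × List Ordinal.{u}) // ∃ α β, α ≤ β ∧ β < o ∧ t = walkNode C α β})

/-- The level of a node of `T(ρ₀)` (the length of its domain). -/
noncomputable def walkLev (C : Ordinal.{u} → Set Ordinal.{u}) (o : Ordinal.{u})
    (t : WalkTree C o) : Ordinal.{u} :=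
  sSup ((fun p : Ordinal.{u} × List Ordinal.{u} => p.1 + 1) '' t.1)

section Aux15

open Classical

variable {κ : Cardinal.{u}} {C : Ordinal.{u} → Set Ordinal.{u}} {S : Set Ordinal.{u}}

private lemma rho0_unfold (C : Ordinal.{u} → Set Ordinal.{u}) (α β : Ordinal.{u}) :
    rho0 C α β = if h : α < β ∧ sInf (C β ∩ {x | α ≤ x}) < β then
      setOtp (C β ∩ Set.Iio α) :: rho0 C α (sInf (C β ∩ {x | α ≤ x})) else [] := by
  unfold rho0
  exact WellFounded.fix_eq _ _ _

private lemma rho0_self (C : Ordinal.{u} → Set Ordinal.{u}) (α : Ordinal.{u}) :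
    rho0 C α α = [] := by
  rw [rho0_unfold]
  exact dif_neg (fun h => lt_irrefl α h.1)

private lemma nxt_spec (hlim : ∀ α < κ.ord, Order.IsSuccLimit α → ClubInOrd α (C α))
    (hsucc : ∀ β : Ordinal.{u}, β + 1 < κ.ord → C (β + 1) = {β})
    {α β : Ordinal.{u}} (hαβ : α < β) (hβ : β < κ.ord) :
    sInf (C β ∩ {x | α ≤ x}) ∈ C β ∧ α ≤ sInf (C β ∩ {x | α ≤ x}) ∧
      sInf (C β ∩ {x | α ≤ x}) < β := by
  obtain ⟨x, hxC, hαx, hxβ⟩ : ∃ x, x ∈ C β ∧ α ≤ x ∧ x < β := by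
    rcases Ordinal.zero_or_succ_or_isSuccLimit β with h0 | ⟨ζ, hζ⟩ | hl
    · exact absurd (h0 ▸ hαβ) ((not_lt_zero (a := α)))
    · rw [← Ordinal.add_one_eq_succ] at hζ
      subst hζ
      refine ⟨ζ, ?_, ?_, ?_⟩
      · rw [hsucc ζ hβ]; rfl
      · rw [Ordinal.add_one_eq_succ] at hαβ; exact Order.lt_succ_iff.mp hαβ
      · rw [Ordinal.add_one_eq_succ]; exact Order.lt_succ ζ
    · obtain ⟨hsub, hunb, _⟩ := hlim β hβ hl
      obtain ⟨x, hx, hax⟩ := hunb α hαβ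
      exact ⟨x, hx, hax.le, hsub hx⟩
  have hne : (C β ∩ {x | α ≤ x}).Nonempty := ⟨x, hxC, hαx⟩
  have hmem := csInf_mem hne
  exact ⟨hmem.1, hmem.2, lt_of_le_of_lt (csInf_le' ⟨hxC, hαx⟩) hxβ⟩

private lemma rho0_ne_nil (hlim : ∀ α < κ.ord, Order.IsSuccLimit α → ClubInOrd α (C α))
    (hsucc : ∀ β : Ordinal.{u}, β + 1 < κ.ord → C (β + 1) = {β})
    {α β : Ordinal.{u}} (hαβ : α < β) (hβ : β < κ.ord) : rho0 C α β ≠ [] := by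
  rw [rho0_unfold, dif_pos ⟨hαβ, (nxt_spec hlim hsucc hαβ hβ).2.2⟩]
  simp

private lemma avoid_bound (hlim : ∀ α < κ.ord, Order.IsSuccLimit α → ClubInOrd α (C α))
    (hsucc : ∀ β : Ordinal.{u}, β + 1 < κ.ord → C (β + 1) = {β})
    (havoid : ∀ α < κ.ord, Order.IsSuccLimit α → C α ∩ S = ∅)
    {α γ : Ordinal.{u}} (hα0 : 0 < α) (hαS : α ∈ S) (hαγ : α < γ) (hγ : γ < κ.ord) :
    ∃ b < α, ∀ x ∈ C γ, x < α → x ≤ b := by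
  rcases Ordinal.zero_or_succ_or_isSuccLimit γ with h0 | ⟨ζ, hζ⟩ | hl
  · exact absurd (h0 ▸ hαγ) ((not_lt_zero (a := α)))
  · rw [← Ordinal.add_one_eq_succ] at hζ
    subst hζ
    rw [hsucc ζ hγ]
    by_cases hζα : ζ < α
    · exact ⟨ζ, hζα, fun x hx _ => le_of_eq hx⟩
    · refine ⟨0, hα0, fun x hx hxα => absurd hxα ?_⟩
      rw [Set.mem_singleton_iff] at hx
      subst hx
      exact fun hh => hζα hh
  · obtain ⟨hsub, hunb, hclosed⟩ := hlim γ hγ hl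
    by_cases hb : sSup (C γ ∩ Set.Iio α) < α
    · exact ⟨_, hb, fun x hx hxα => le_csSup ⟨α, fun y hy => hy.2.le⟩ ⟨hx, hxα⟩⟩
    · exfalso
      have hbα : sSup (C γ ∩ Set.Iio α) = α :=
        le_antisymm (csSup_le' fun y hy => hy.2.le) (not_lt.mp hb)
      have hnonempty : (C γ ∩ Set.Iio α).Nonempty := by
        by_contra h
        rw [Set.not_nonempty_iff_eq_empty] at h
        rw [h, csSup_empty] at hbα
        exact hα0.ne' (by rw [← hbα]; rfl)
      have hmem : α ∈ C γ := by
        apply hclosed α hαγ hα0.ne'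
        intro β' hβ'
        obtain ⟨x, hx, hβx⟩ := exists_lt_of_lt_csSup hnonempty (by rw [hbα]; exact hβ')
        exact ⟨x, hx.1, hβx, hx.2⟩
      have : α ∈ C γ ∩ S := ⟨hmem, hαS⟩
      rw [havoid γ hγ hl] at this
      exact this

private lemma main_walk (hlim : ∀ α < κ.ord, Order.IsSuccLimit α → ClubInOrd α (C α))
    (hsucc : ∀ β : Ordinal.{u}, β + 1 < κ.ord → C (β + 1) = {β})
    (havoid : ∀ α < κ.ord, Order.IsSuccLimit α → C α ∩ S = ∅)
    {α : Ordinal.{u}} (hα0 : 0 < α) (hαS : α ∈ S) (β : Ordinal.{u})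
    (hαβ : α ≤ β) (hβκ : β < κ.ord) :
    ∃ b, b < α ∧ ∀ ξ, b < ξ → ξ ≤ α → rho0 C ξ β = rho0 C α β ++ rho0 C ξ α := by
  revert hαβ hβκ
  induction β using Ordinal.induction with
  | h β ih =>
    intro hαβ hβκ
    rcases eq_or_lt_of_le hαβ with heq | hαβ'
    · subst heq
      exact ⟨0, hα0, fun ξ _ _ => by rw [rho0_self]; rfl⟩
    · obtain ⟨hγC, hαγ, hγβ⟩ := nxt_spec hlim hsucc hαβ' hβκ
      obtain ⟨b₀, hb₀α, hb₀⟩ := avoid_bound hlim hsucc havoid hα0 hαS hαβ' hβκ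
      have hset : ∀ ξ, b₀ < ξ → ξ ≤ α →
          C β ∩ {x | ξ ≤ x} = C β ∩ {x | α ≤ x} := by
        intro ξ hbξ hξα
        ext x
        simp only [Set.mem_inter_iff, Set.mem_setOf_eq]
        constructor
        · rintro ⟨hxC, hξx⟩
          refine ⟨hxC, ?_⟩
          by_contra hxα
          exact absurd hξx (not_le.mpr (lt_of_le_of_lt (hb₀ x hxC (not_le.mp hxα)) hbξ))
        · rintro ⟨hxC, hαx⟩
          exact ⟨hxC, le_trans hξα hαx⟩
      have hset2 : ∀ ξ, b₀ < ξ → ξ ≤ α →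
          C β ∩ Set.Iio ξ = C β ∩ Set.Iio α := by
        intro ξ hbξ hξα
        ext x
        simp only [Set.mem_inter_iff, Set.mem_Iio]
        constructor
        · rintro ⟨hxC, hxξ⟩
          exact ⟨hxC, lt_of_lt_of_le hxξ hξα⟩
        · rintro ⟨hxC, hxα⟩
          exact ⟨hxC, lt_of_le_of_lt (hb₀ x hxC hxα) hbξ⟩
      have hαform : rho0 C α β =
          setOtp (C β ∩ Set.Iio α) :: rho0 C α (sInf (C β ∩ {x | α ≤ x})) := by
        rw [rho0_unfold C α β, dif_pos ⟨hαβ', hγβ⟩]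
      rcases eq_or_lt_of_le hαγ with hγα | hαγ'
      · refine ⟨b₀, hb₀α, ?_⟩
        intro ξ hbξ hξα
        rcases eq_or_lt_of_le hξα with rfl | hξα'
        · rw [rho0_self]; exact (List.append_nil _).symm
        · have h1 : sInf (C β ∩ {x | ξ ≤ x}) = α := by
            rw [hset ξ hbξ hξα'.le]; exact hγα.symm
          rw [rho0_unfold C ξ β, dif_pos ⟨lt_trans hξα' hαβ', by rw [h1]; exact hαβ'⟩,
            h1, hset2 ξ hbξ hξα'.le, hαform, ← hγα, rho0_self]
          rfl
      · obtain ⟨b₁, hb₁α, hIH⟩ := ih _ hγβ hαγ'.le (hγβ.trans hβκ)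
        refine ⟨max b₀ b₁, max_lt hb₀α hb₁α, ?_⟩
        intro ξ hbξ hξα
        have hbξ0 : b₀ < ξ := lt_of_le_of_lt (le_max_left _ _) hbξ
        have hbξ1 : b₁ < ξ := lt_of_le_of_lt (le_max_right _ _) hbξ
        rcases eq_or_lt_of_le hξα with rfl | hξα'
        · rw [rho0_self]; exact (List.append_nil _).symm
        · have h1 : sInf (C β ∩ {x | ξ ≤ x}) = sInf (C β ∩ {x | α ≤ x}) := by
            rw [hset ξ hbξ0 hξα'.le]
          rw [rho0_unfold C ξ β, dif_pos ⟨lt_trans hξα' hαβ', by rw [h1]; exact hγβ⟩,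
            h1, hset2 ξ hbξ0 hξα'.le, hαform, hIH ξ hbξ1 hξα'.le]
          rfl

private lemma walkLev_eq {o : Ordinal.{u}} (t : WalkTree C o) (a b : Ordinal.{u})
    (ht : t.1 = walkNode C a b) : walkLev C o t = a := by
  have himg : (fun p : Ordinal.{u} × List Ordinal.{u} => p.1 + 1) '' t.1 =
      (fun ξ => ξ + 1) '' Set.Iio a := by
    rw [ht]
    ext x
    constructor
    · rintro ⟨p, hp, rfl⟩
      exact ⟨p.1, hp.1, rfl⟩
    · rintro ⟨ξ, hξ, rfl⟩
      exact ⟨(ξ, rho0 C ξ b), ⟨hξ, rfl⟩, rfl⟩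
  have hub : ∀ x ∈ (fun ξ : Ordinal.{u} => ξ + 1) '' Set.Iio a, x ≤ a := by
    rintro x ⟨ξ, hξ, rfl⟩
    show ξ + 1 ≤ a
    rw [Ordinal.add_one_eq_succ]
    exact Order.succ_le_of_lt hξ
  unfold walkLev
  rw [himg]
  apply le_antisymm
  · exact csSup_le' hub
  · by_contra h
    push_neg at h
    have hmem : sSup ((fun ξ : Ordinal.{u} => ξ + 1) '' Set.Iio a) + 1 ∈
        (fun ξ : Ordinal.{u} => ξ + 1) '' Set.Iio a := ⟨_, h, rfl⟩
    have := le_csSup ⟨a, hub⟩ hmem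
    rw [Ordinal.add_one_eq_succ] at this
    exact absurd this (not_le.mpr (Order.lt_succ _))

private lemma walkNode_mono {a a' b : Ordinal.{u}} (h : a ≤ a') :
    walkNode C a b ⊆ walkNode C a' b :=
  fun p hp => ⟨lt_of_lt_of_le hp.1 h, hp.2⟩

private lemma walkNode_ne {a a' b b' : Ordinal.{u}} (h : a < a') :
    walkNode C a b ≠ walkNode C a' b' := by
  intro heq
  have : (a, rho0 C a b') ∈ walkNode C a' b' := ⟨h, rfl⟩
  rw [← heq] at this
  exact lt_irrefl a this.1

private lemma walkNode_le {a a' b b' : Ordinal.{u}}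
    (h : walkNode C a b ⊆ walkNode C a' b') : a ≤ a' := by
  by_contra hc
  push_neg at hc
  have hm : ((a', rho0 C a' b) : Ordinal.{u} × List Ordinal.{u}) ∈ walkNode C a b := ⟨hc, rfl⟩
  exact lt_irrefl a' (h hm).1

private lemma walkNode_agree {a a' b b' : Ordinal.{u}}
    (h : walkNode C a b ⊆ walkNode C a' b') {ξ : Ordinal.{u}} (hξ : ξ < a) :
    rho0 C ξ b = rho0 C ξ b' := by
  have hm : ((ξ, rho0 C ξ b) : Ordinal.{u} × List Ordinal.{u}) ∈ walkNode C a b := ⟨hξ, rfl⟩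
  exact (h hm).2

private lemma walkNode_eq_of_le {a a' b b' : Ordinal.{u}}
    (h : walkNode C a b ⊆ walkNode C a' b') (h2 : a' ≤ a) :
    walkNode C a b = walkNode C a' b' := by
  apply Set.Subset.antisymm h
  rintro ⟨ξ, l⟩ ⟨hξ, hl⟩
  exact ⟨lt_of_lt_of_le hξ h2,
    hl.trans (walkNode_agree h (lt_of_lt_of_le hξ h2)).symm⟩

private noncomputable def repA {o : Ordinal.{u}} (u : WalkTree C o) : Ordinal.{u} :=
  u.2.choose

private noncomputable def repB {o : Ordinal.{u}} (u : WalkTree C o) : Ordinal.{u} :=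
  u.2.choose_spec.choose

private lemma rep_spec {o : Ordinal.{u}} (u : WalkTree C o) :
    repA u ≤ repB u ∧ repB u < o ∧ u.1 = walkNode C (repA u) (repB u) :=
  u.2.choose_spec.choose_spec

private noncomputable def cutNode {o : Ordinal.{u}} (u : WalkTree C o) (γ : Ordinal.{u})
    (hγ : γ ≤ repA u) : WalkTree C o :=
  ⟨walkNode C γ (repB u), γ, repB u, le_trans hγ (rep_spec u).1, (rep_spec u).2.1, rfl⟩

private noncomputable def lamF (hlim : ∀ α < κ.ord, Order.IsSuccLimit α → ClubInOrd α (C α))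
    (hsucc : ∀ β : Ordinal.{u}, β + 1 < κ.ord → C (β + 1) = {β})
    (havoid : ∀ α < κ.ord, Order.IsSuccLimit α → C α ∩ S = ∅)
    (u : WalkTree C κ.ord) : Ordinal.{u} :=
  if h : Order.IsSuccLimit (repA u) ∧ repA u ∈ S then
    (main_walk hlim hsucc havoid h.1.pos h.2 (repB u) (rep_spec u).1 (rep_spec u).2.1).choose
  else 0

private lemma lamF_spec (hlim : ∀ α < κ.ord, Order.IsSuccLimit α → ClubInOrd α (C α))
    (hsucc : ∀ β : Ordinal.{u}, β + 1 < κ.ord → C (β + 1) = {β})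
    (havoid : ∀ α < κ.ord, Order.IsSuccLimit α → C α ∩ S = ∅)
    (u : WalkTree C κ.ord) (h : Order.IsSuccLimit (repA u) ∧ repA u ∈ S) :
    lamF hlim hsucc havoid u < repA u ∧ ∀ ξ, lamF hlim hsucc havoid u < ξ → ξ ≤ repA u →
      rho0 C ξ (repB u) = rho0 C (repA u) (repB u) ++ rho0 C ξ (repA u) := by
  unfold lamF
  rw [dif_pos h]
  exact (main_walk hlim hsucc havoid h.1.pos h.2 (repB u)
    (rep_spec u).1 (rep_spec u).2.1).choose_spec

private noncomputable def rfunF (hlim : ∀ α < κ.ord, Order.IsSuccLimit α → ClubInOrd α (C α))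
    (hsucc : ∀ β : Ordinal.{u}, β + 1 < κ.ord → C (β + 1) = {β})
    (havoid : ∀ α < κ.ord, Order.IsSuccLimit α → C α ∩ S = ∅)
    (u : WalkTree C κ.ord) : WalkTree C κ.ord :=
  if h : Order.IsSuccLimit (repA u) ∧ repA u ∈ S then
    cutNode u (lamF hlim hsucc havoid u + 1)
      (by rw [Ordinal.add_one_eq_succ]
          exact Order.succ_le_of_lt (lamF_spec hlim hsucc havoid u h).1)
  else
    cutNode u (Ordinal.omega0 * (repA u / Ordinal.omega0)) (Ordinal.mul_div_le _ _)

private lemma rfunF_val_pos (hlim : ∀ α < κ.ord, Order.IsSuccLimit α → ClubInOrd α (C α))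
    (hsucc : ∀ β : Ordinal.{u}, β + 1 < κ.ord → C (β + 1) = {β})
    (havoid : ∀ α < κ.ord, Order.IsSuccLimit α → C α ∩ S = ∅)
    (u : WalkTree C κ.ord) (h : Order.IsSuccLimit (repA u) ∧ repA u ∈ S) :
    (rfunF hlim hsucc havoid u).1 =
      walkNode C (lamF hlim hsucc havoid u + 1) (repB u) := by
  unfold rfunF
  rw [dif_pos h]
  rfl

private lemma rfunF_val_neg (hlim : ∀ α < κ.ord, Order.IsSuccLimit α → ClubInOrd α (C α))
    (hsucc : ∀ β : Ordinal.{u}, β + 1 < κ.ord → C (β + 1) = {β})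
    (havoid : ∀ α < κ.ord, Order.IsSuccLimit α → C α ∩ S = ∅)
    (u : WalkTree C κ.ord) (h : ¬ (Order.IsSuccLimit (repA u) ∧ repA u ∈ S)) :
    (rfunF hlim hsucc havoid u).1 =
      walkNode C (Ordinal.omega0 * (repA u / Ordinal.omega0)) (repB u) := by
  unfold rfunF
  rw [dif_neg h]
  rfl

private noncomputable def npart (a : Ordinal.{u}) : ℕ :=
  (Ordinal.lt_omega0.mp (Ordinal.mod_lt a Ordinal.omega0_ne_zero)).choose

private lemma npart_spec (a : Ordinal.{u}) : a % Ordinal.omega0 = (npart a : Ordinal.{u}) :=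
  (Ordinal.lt_omega0.mp (Ordinal.mod_lt a Ordinal.omega0_ne_zero)).choose_spec

private lemma limitpart_add (a : Ordinal.{u}) :
    Ordinal.omega0 * (a / Ordinal.omega0) + (npart a : Ordinal.{u}) = a := by
  rw [← npart_spec]
  exact Ordinal.div_add_mod a _

private lemma limitpart_lt {a : Ordinal.{u}} (h0 : a ≠ 0) (hnl : ¬ Order.IsSuccLimit a) :
    Ordinal.omega0 * (a / Ordinal.omega0) < a := by
  have hm : a % Ordinal.omega0 ≠ 0 := by
    intro hz
    exact hnl (Ordinal.isSuccLimit_iff_omega0_dvd.mpr ⟨h0, Ordinal.dvd_iff_mod_eq_zero.mpr hz⟩)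
  calc Ordinal.omega0 * (a / Ordinal.omega0)
      = Ordinal.omega0 * (a / Ordinal.omega0) + 0 := (add_zero _).symm
    _ < Ordinal.omega0 * (a / Ordinal.omega0) + a % Ordinal.omega0 := by
        rw [add_lt_add_iff_left]
        exact pos_iff_ne_zero.mpr hm
    _ = a := Ordinal.div_add_mod a _

end Aux15

/-- if a C-sequence of length κ avoids `S ⊆ κ`, then `S` is nonstationary
with respect to the tree `T(ρ₀)` of full codes of walks through the C-sequence. -/
theorem stmt_15 (κ : Cardinal.{u}) (hreg : κ.IsRegular) (hunc : ℵ₀ < κ)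
    (C : Ordinal.{u} → Set Ordinal.{u}) (S : Set Ordinal.{u}) (hS : S ⊆ Set.Iio κ.ord)
    (hlim : ∀ α < κ.ord, Order.IsSuccLimit α → ClubInOrd α (C α))
    (hsucc : ∀ β : Ordinal.{u}, β + 1 < κ.ord → C (β + 1) = {β})
    (havoid : ∀ α < κ.ord, Order.IsSuccLimit α → C α ∩ S = ∅) :
    NonstatWrt κ (WalkTree C κ.ord) (walkLev C κ.ord) S := by
  classical
  obtain ⟨emb, hembinj⟩ : ∃ f : ℕ → (ℵ₀ : Cardinal.{u}).ord.ToType, Function.Injective f := by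
    refine ⟨fun n => Ordinal.ToType.mk ⟨(n : Ordinal.{u}), ?_⟩, ?_⟩
    · rw [Cardinal.ord_aleph0]; exact Ordinal.nat_lt_omega0 n
    · intro m n h
      have h2 := (Ordinal.ToType.mk).injective h
      have h3 : ((m : ℕ) : Ordinal.{u}) = ((n : ℕ) : Ordinal.{u}) :=
        congrArg Subtype.val h2
      exact_mod_cast h3
  refine ⟨rfunF hlim hsucc havoid, ?_, ?_⟩
  · -- regressivity
    intro t ht hex
    obtain ⟨hab, hbo, hval⟩ := rep_spec t
    have hlev : walkLev C κ.ord t = repA t := walkLev_eq t _ _ hval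
    have htS : repA t ∈ S := hlev ▸ ht
    have hpos : 0 < repA t := by
      rcases hex with ⟨s, hs⟩
      by_contra h
      push_neg at h
      have h0 : repA t = 0 := le_antisymm h (zero_le)
      have hte : t.1 = ∅ := by
        rw [hval, h0]
        ext p
        simp only [walkNode, Set.mem_setOf_eq, Set.mem_empty_iff_false, iff_false, not_and]
        intro hp
        exact absurd hp ((not_lt_zero (a := p.1)))
      have hsub : s.1 ⊆ t.1 := le_of_lt hs
      rw [hte, Set.subset_empty_iff] at hsub
      exact hs.ne (Subtype.ext (hsub.trans hte.symm))
    by_cases hl : Order.IsSuccLimit (repA t) ∧ repA t ∈ S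
    · have hspec := lamF_spec hlim hsucc havoid t hl
      have hlt : lamF hlim hsucc havoid t + 1 < repA t := by
        rw [Ordinal.add_one_eq_succ]
        exact hl.1.succ_lt hspec.1
      apply lt_of_le_of_ne
      · have hsub : (rfunF hlim hsucc havoid t).1 ⊆ t.1 := by
          rw [rfunF_val_pos hlim hsucc havoid t hl, hval]
          exact walkNode_mono hlt.le
        exact hsub
      · intro heq
        have hh := congrArg Subtype.val heq
        rw [rfunF_val_pos hlim hsucc havoid t hl, hval] at hh
        exact walkNode_ne hlt hh
    · have hnl : ¬ Order.IsSuccLimit (repA t) := fun hh => hl ⟨hh, htS⟩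
      have hlt : Ordinal.omega0 * (repA t / Ordinal.omega0) < repA t :=
        limitpart_lt hpos.ne' hnl
      apply lt_of_le_of_ne
      · have hsub : (rfunF hlim hsucc havoid t).1 ⊆ t.1 := by
          rw [rfunF_val_neg hlim hsucc havoid t hl, hval]
          exact walkNode_mono hlt.le
        exact hsub
      · intro heq
        have hh := congrArg Subtype.val heq
        rw [rfunF_val_neg hlim hsucc havoid t hl, hval] at hh
        exact walkNode_ne hlt hh
  · -- injectivity on chains in each fiber
    intro t
    refine ⟨ℵ₀, hunc, fun u => emb (2 *
      (if Order.IsSuccLimit (repA u) ∧ repA u ∈ S then (rho0 C (repA u) (repB u)).length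
        else npart (repA u)) +
      (if Order.IsSuccLimit (repA u) ∧ repA u ∈ S then 1 else 0)), ?_⟩
    intro u v hu hv hru hrv huv hc
    by_contra hne
    obtain ⟨habU, hboU, hvalU⟩ := rep_spec u
    obtain ⟨habV, hboV, hvalV⟩ := rep_spec v
    have huS : repA u ∈ S := walkLev_eq u _ _ hvalU ▸ hu
    have hvS : repA v ∈ S := walkLev_eq v _ _ hvalV ▸ hv
    have hsub : walkNode C (repA u) (repB u) ⊆ walkNode C (repA v) (repB v) := by
      rw [← hvalU, ← hvalV]
      exact huv
    have hle : repA u ≤ repA v := walkNode_le hsub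
    have hltAV : repA u < repA v := by
      rcases lt_or_eq_of_le hle with h | h
      · exact h
      · exfalso
        apply hne
        apply Subtype.ext
        rw [hvalU, hvalV]
        exact walkNode_eq_of_le hsub h.ge
    have hAVκ : repA v < κ.ord := lt_of_le_of_lt habV hboV
    have hcode := hembinj hc
    by_cases hDu : Order.IsSuccLimit (repA u) ∧ repA u ∈ S <;>
      by_cases hDv : Order.IsSuccLimit (repA v) ∧ repA v ∈ S
    · -- both limit
      have hsu := lamF_spec hlim hsucc havoid u hDu
      have hsv := lamF_spec hlim hsucc havoid v hDv
      have h1 : walkLev C κ.ord t = lamF hlim hsucc havoid u + 1 := by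
        rw [← hru]
        exact walkLev_eq _ _ _ (rfunF_val_pos hlim hsucc havoid u hDu)
      have h2 : walkLev C κ.ord t = lamF hlim hsucc havoid v + 1 := by
        rw [← hrv]
        exact walkLev_eq _ _ _ (rfunF_val_pos hlim hsucc havoid v hDv)
      have hll : lamF hlim hsucc havoid u = lamF hlim hsucc havoid v := by
        have h3 := h1.symm.trans h2
        rw [Ordinal.add_one_eq_succ, Ordinal.add_one_eq_succ] at h3
        exact le_antisymm (Order.lt_succ_iff.mp (h3 ▸ Order.lt_succ _))
          (Order.lt_succ_iff.mp (h3 ▸ Order.lt_succ _))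
      obtain ⟨b₂, hb₂, h₂⟩ := main_walk hlim hsucc havoid hDu.1.pos huS (repA v)
        hltAV.le hAVκ
      have hmax : max (lamF hlim hsucc havoid u) b₂ < repA u := max_lt hsu.1 hb₂
      have hself : max (lamF hlim hsucc havoid u) b₂ <
          max (lamF hlim hsucc havoid u) b₂ + 1 := by
        rw [Ordinal.add_one_eq_succ]
        exact Order.lt_succ _
      have hξu : max (lamF hlim hsucc havoid u) b₂ + 1 < repA u := by
        rw [Ordinal.add_one_eq_succ]
        exact hDu.1.succ_lt hmax
      have hlξ : lamF hlim hsucc havoid u < max (lamF hlim hsucc havoid u) b₂ + 1 :=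
        lt_of_le_of_lt (le_max_left _ _) hself
      have hbξ : b₂ < max (lamF hlim hsucc havoid u) b₂ + 1 :=
        lt_of_le_of_lt (le_max_right _ _) hself
      have k1 := hsu.2 _ hlξ hξu.le
      have k2 := hsv.2 _ (hll ▸ hlξ) (le_of_lt (hξu.trans hltAV))
      have k3 := h₂ _ hbξ hξu.le
      have kagree : rho0 C (max (lamF hlim hsucc havoid u) b₂ + 1) (repB u) =
          rho0 C (max (lamF hlim hsucc havoid u) b₂ + 1) (repB v) :=
        walkNode_agree hsub hξu
      have hlen : (rho0 C (repA u) (repB u)).length =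
          (rho0 C (repA v) (repB v)).length := by
        simp only [if_pos hDu, if_pos hDv] at hcode
        omega
      have hnil : (rho0 C (repA u) (repA v)).length = 0 := by
        have e : rho0 C (repA u) (repB u) ++
            rho0 C (max (lamF hlim hsucc havoid u) b₂ + 1) (repA u) =
            rho0 C (repA v) (repB v) ++ (rho0 C (repA u) (repA v) ++
            rho0 C (max (lamF hlim hsucc havoid u) b₂ + 1) (repA u)) := by
          rw [← k1, kagree, k2, k3]
        have e2 := congrArg List.length e
        simp only [List.length_append] at e2
        omega
      exact rho0_ne_nil hlim hsucc hltAV hAVκ (List.length_eq_zero_iff.mp hnil)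
    · simp only [if_pos hDu, if_neg hDv] at hcode
      omega
    · simp only [if_neg hDu, if_pos hDv] at hcode
      omega
    · -- both non-limit
      have h1 : walkLev C κ.ord t = Ordinal.omega0 * (repA u / Ordinal.omega0) := by
        rw [← hru]
        exact walkLev_eq _ _ _ (rfunF_val_neg hlim hsucc havoid u hDu)
      have h2 : walkLev C κ.ord t = Ordinal.omega0 * (repA v / Ordinal.omega0) := by
        rw [← hrv]
        exact walkLev_eq _ _ _ (rfunF_val_neg hlim hsucc havoid v hDv)
      have heta := h1.symm.trans h2
      simp only [if_neg hDu, if_neg hDv] at hcode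
      have hnp : npart (repA u) = npart (repA v) := by omega
      have : repA u = repA v := by
        rw [← limitpart_add (repA u), ← limitpart_add (repA v), heta, hnp]
      exact absurd this hltAV.ne

end Stmt15

end Layered
end

section
/- Let κ be an uncountable regular cardinal, λ ≥ κ with λ = λ^{<κ}, and F a normal filter on P_κ(λ) such that every F-layered partial order is κ-stationarily layered. Then every completely F-layered partial order is κ-stationarily layered. -/
universe u v

open Cardinal

namespace Layered

variable {P : Type u}

/-- A partial order is completely F-layered if every subset of size ≤ λ extends to a regular
suborder of size ≤ λ, and every regular suborder of size ≤ λ is F-layered. -/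
def CompletelyFLayered (κ : Cardinal.{u}) {X : Type u} (F : Filter (Set X))
    (Q : Type u) [PartialOrder Q] : Prop :=
  (∀ A : Set Q, #A ≤ #X → ∃ S : Set Q, RegularSuborder S ∧ #S ≤ #X ∧ A ⊆ S) ∧
  ∀ S : Set Q, RegularSuborder S → #S ≤ #X → FLayered κ F ↥S

section AuxBasic

variable {κ : Cardinal.{u}} [PartialOrder P]

theorem Compat.symm {p q : P} (h : Compat p q) : Compat q p := by
  obtain ⟨r, h1, h2⟩ := h; exact ⟨r, h2, h1⟩

theorem Compat.refl (p : P) : Compat p p := ⟨p, le_refl p, le_refl p⟩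

theorem CompatIn.compat {S : Set P} {p q : P} (h : CompatIn S p q) : Compat p q := by
  obtain ⟨r, _, h1, h2⟩ := h; exact ⟨r, h1, h2⟩

/-- Every antichain extends to a maximal antichain (Zorn). -/
theorem exists_maxAntichain {A : Set P} (hA : IsPOAntichain A) :
    ∃ M, A ⊆ M ∧ IsPOAntichain M ∧ ∀ p : P, ∃ a ∈ M, Compat p a := by
  obtain ⟨M, hAM, hMmax⟩ := zorn_subset_nonempty {B : Set P | IsPOAntichain B}
    (fun c hcS hchain hcne => by
      refine ⟨⋃₀ c, ?_, fun s hs => Set.subset_sUnion_of_mem hs⟩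
      rintro p ⟨s, hs, hps⟩ q ⟨t, ht, hqt⟩ hne
      rcases hchain.total hs ht with h | h
      · exact hcS ht p (h hps) q hqt hne
      · exact hcS hs p hps q (h hqt) hne) A hA
  have hMalt : IsPOAntichain M := hMmax.1
  refine ⟨M, hAM, hMalt, fun p => ?_⟩
  by_cases hp : p ∈ M
  · exact ⟨p, hp, Compat.refl p⟩
  · by_contra hcon
    push_neg at hcon
    have hcon' : ∀ a ∈ M, ¬ Compat p a := fun a ha h => hcon a ha h
    have hins : IsPOAntichain (insert p M) := by
      rintro x (rfl | hx) y (rfl | hy) hne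
      · exact absurd rfl hne
      · exact hcon' y hy
      · exact fun h => hcon' x hx h.symm
      · exact hMalt x hx y hy hne
    have := hMmax.2 hins (Set.subset_insert p M)
    exact hp (this (Set.mem_insert p M))

end AuxBasic
section CCsec

variable {κ : Cardinal.{u}} [PartialOrder P]

/-- A κ-stationarily layered poset satisfies the κ-chain condition. -/
theorem cc_of_stationarilyLayered (hreg : κ.IsRegular) (hunc : ℵ₀ < κ)
    (hSL : StationarilyLayered κ P) : CC κ P := by
  intro A hA
  by_contra hlt
  have hκA : κ ≤ #A := not_lt.1 hlt
  obtain ⟨A₀, hA₀A, hA₀⟩ := Cardinal.le_mk_iff_exists_subset.1 hκA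
  obtain ⟨M, hA₀M, hManti, hMmax⟩ := exists_maxAntichain
    (fun p hp q hq hne => hA p (hA₀A hp) q (hA₀A hq) hne)
  have hselx : ∀ p : P, ∃ ar : P × P, ar.1 ∈ M ∧ ar.2 ≤ p ∧ ar.2 ≤ ar.1 := by
    intro p
    obtain ⟨a, haM, r, h1, h2⟩ := hMmax p
    exact ⟨(a, r), haM, h1, h2⟩
  choose sel hsel1 hsel2 hsel3 using hselx
  set f : Set P → Set P :=
    fun b => b ∪ (fun p => (sel p).1) '' b ∪ (fun p => (sel p).2) '' b with hf
  have hfcard : ∀ b : Set P, #b < κ → #(f b) < κ := by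
    intro b hb
    have h1 : #((fun p => (sel p).1) '' b) < κ := lt_of_le_of_lt Cardinal.mk_image_le hb
    have h2 : #((fun p => (sel p).2) '' b) < κ := lt_of_le_of_lt Cardinal.mk_image_le hb
    calc #(f b) ≤ #(b ∪ (fun p => (sel p).1) '' b : Set P) + #((fun p => (sel p).2) '' b) :=
          Cardinal.mk_union_le _ _
      _ < κ := Cardinal.add_lt_of_lt hreg.aleph0_le
          (lt_of_le_of_lt (Cardinal.mk_union_le _ _)
            (Cardinal.add_lt_of_lt hreg.aleph0_le hb h1)) h2
  set C₀ : Set (Set P) := {c | #c < κ ∧ ∀ p ∈ c, ∃ a ∈ M ∩ c, ∃ r ∈ c, r ≤ p ∧ r ≤ a} with hC₀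
  have hclub : PkClub κ C₀ := by
    refine ⟨fun c hc => ⟨Set.subset_univ c, hc.1⟩, ?_, ?_⟩
    · intro a _ ha
      have hiter : ∀ n, #(f^[n] a) < κ := by
        intro n
        induction n with
        | zero => simpa using ha
        | succ n ih => rw [Function.iterate_succ_apply']; exact hfcard _ ih
      refine ⟨⋃ n : ULift.{u} ℕ, f^[n.down] a, ⟨?_, ?_⟩,
        by simpa using Set.subset_iUnion (fun n : ULift.{u} ℕ => f^[n.down] a) ⟨0⟩⟩
      · calc #(⋃ n : ULift.{u} ℕ, f^[n.down] a) ≤ #(ULift.{u} ℕ) * ⨆ n : ULift.{u} ℕ, #(f^[n.down] a) :=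
            Cardinal.mk_iUnion_le _
          _ < κ := by
            rw [Cardinal.mk_denumerable]
            exact Cardinal.mul_lt_of_lt hreg.aleph0_le hunc
              (Cardinal.iSup_lt_of_isRegular hreg
                (by rw [Cardinal.mk_denumerable]; exact hunc) (fun n => hiter n.down))
      · intro p hp
        obtain ⟨n, hpn⟩ := Set.mem_iUnion.1 hp
        have hmem1 : (sel p).1 ∈ f^[n.down+1] a := by
          rw [Function.iterate_succ_apply']
          exact Set.mem_union_left _ (Set.mem_union_right _ ⟨p, hpn, rfl⟩)
        have hmem2 : (sel p).2 ∈ f^[n.down+1] a := by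
          rw [Function.iterate_succ_apply']
          exact Set.mem_union_right _ ⟨p, hpn, rfl⟩
        exact ⟨(sel p).1, ⟨hsel1 p, Set.mem_iUnion.2 ⟨⟨n.down+1⟩, hmem1⟩⟩,
          (sel p).2, Set.mem_iUnion.2 ⟨⟨n.down+1⟩, hmem2⟩, hsel2 p, hsel3 p⟩
    · intro D hDne hDC hDchain hDcard
      refine ⟨?_, ?_⟩
      · calc #(⋃₀ D) ≤ #D * ⨆ s : D, #(s : Set P) := Cardinal.mk_sUnion_le D
          _ < κ := Cardinal.mul_lt_of_lt hreg.aleph0_le hDcard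
              (Cardinal.iSup_lt_of_isRegular hreg hDcard (fun s => (hDC s.2).1))
      · intro p hp
        obtain ⟨d, hdD, hpd⟩ := hp
        obtain ⟨a, ⟨haM, hac⟩, r, hrc, h1, h2⟩ := (hDC hdD).2 p hpd
        exact ⟨a, ⟨haM, ⟨d, hdD, hac⟩⟩, r, ⟨d, hdD, hrc⟩, h1, h2⟩
  obtain ⟨c, hcmem⟩ := hSL C₀ hclub
  have hcReg : RegSub κ c := hcmem.1
  have hcC₀ : c ∈ C₀ := hcmem.2
  have hMnotsub : ¬ M ⊆ c := by
    intro h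
    have : κ ≤ #c := by
      calc κ = #A₀ := hA₀.symm
        _ ≤ #M := Cardinal.mk_le_mk_of_subset hA₀M
        _ ≤ #c := Cardinal.mk_le_mk_of_subset h
    exact absurd this (not_le.2 hcC₀.1)
  obtain ⟨astar, haM, hanotc⟩ := Set.not_subset.1 hMnotsub
  have hmaxQ : ∀ p : P, ∃ a ∈ M ∩ c, Compat p a := by
    refine hcReg.1.2 (M ∩ c) Set.inter_subset_right
      (fun p hp q hq hne hci => hManti p hp.1 q hq.1 hne hci.compat) ?_
    intro p hpc
    obtain ⟨a, ⟨haM', hac⟩, r, hrc, h1, h2⟩ := hcC₀.2 p hpc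
    exact ⟨a, ⟨haM', hac⟩, r, hrc, h1, h2⟩
  obtain ⟨a, ⟨haM2, hacmem⟩, hcompat⟩ := hmaxQ astar
  exact hManti astar haM a haM2 (fun h => hanotc (h ▸ hacmem)) hcompat

end CCsec
section Trans

variable [PartialOrder P]

theorem compat_subtype_iff {S : Set P} {x y : ↥S} : Compat x y ↔ CompatIn S ↑x ↑y := by
  constructor
  · rintro ⟨r, h1, h2⟩
    exact ⟨↑r, r.2, Subtype.coe_le_coe.2 h1, Subtype.coe_le_coe.2 h2⟩
  · rintro ⟨r, hrS, h1, h2⟩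
    exact ⟨⟨r, hrS⟩, Subtype.coe_le_coe.1 h1, Subtype.coe_le_coe.1 h2⟩

/-- A regular suborder of a regular suborder is a regular suborder. -/
theorem regularSuborder_trans {S : Set P} (hS : RegularSuborder S) {c : Set ↥S}
    (hc : RegularSuborder c) : RegularSuborder (Subtype.val '' c) := by
  constructor
  · rintro p ⟨x, hxc, rfl⟩ q ⟨y, hyc, rfl⟩ hpq
    have h2 : Compat x y := compat_subtype_iff.2 (hS.1 ↑x x.2 ↑y y.2 hpq)
    obtain ⟨r, hrc, ha, hb⟩ := hc.1 x hxc y hyc h2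
    exact ⟨↑r, ⟨r, hrc, rfl⟩, Subtype.coe_le_coe.2 ha, Subtype.coe_le_coe.2 hb⟩
  · intro A hAsub hAanti hApre
    set A' : Set ↥S := {x | x ∈ c ∧ ↑x ∈ A} with hA'
    have hvalA' : ∀ a ∈ A, ∃ x ∈ A', ↑x = a := by
      intro a ha
      obtain ⟨x, hxc, rfl⟩ := hAsub ha
      exact ⟨x, ⟨hxc, ha⟩, rfl⟩
    have hanti' : ∀ x ∈ A', ∀ y ∈ A', x ≠ y → ¬ CompatIn c x y := by
      rintro x hx y hy hne ⟨r, hrc, h1, h2⟩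
      exact hAanti ↑x hx.2 ↑y hy.2 (fun h => hne (Subtype.ext h))
        ⟨↑r, ⟨r, hrc, rfl⟩, Subtype.coe_le_coe.2 h1, Subtype.coe_le_coe.2 h2⟩
    have hpre' : ∀ x ∈ c, ∃ y ∈ A', CompatIn c x y := by
      intro x hxc
      obtain ⟨a, haA, r, hrT, h1, h2⟩ := hApre ↑x ⟨x, hxc, rfl⟩
      obtain ⟨ry, hryc, rfl⟩ := hrT
      obtain ⟨ya, hya, rfl⟩ := hAsub haA
      exact ⟨ya, ⟨hya, haA⟩, ry, hryc, Subtype.coe_le_coe.1 h1, Subtype.coe_le_coe.1 h2⟩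
    have hstep := hc.2 A' (fun x hx => hx.1) hanti' hpre'
    have hantiS : ∀ p ∈ A, ∀ q ∈ A, p ≠ q → ¬ CompatIn S p q := by
      intro p hp q hq hne hci
      obtain ⟨x, hx, rfl⟩ := hvalA' p hp
      obtain ⟨y, hy, rfl⟩ := hvalA' q hq
      obtain ⟨r, hrc, h1, h2⟩ := hc.1 x hx.1 y hy.1 (compat_subtype_iff.2 hci)
      exact hAanti _ hp _ hq hne
        ⟨↑r, ⟨r, hrc, rfl⟩, Subtype.coe_le_coe.2 h1, Subtype.coe_le_coe.2 h2⟩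
    have hpreS : ∀ p ∈ S, ∃ q ∈ A, CompatIn S p q := by
      intro p hpS
      obtain ⟨y, hy, r, h1, h2⟩ := hstep ⟨p, hpS⟩
      exact ⟨↑y, hy.2, ↑r, r.2, Subtype.coe_le_coe.2 h1, Subtype.coe_le_coe.2 h2⟩
    exact hS.2 A (fun a ha => by obtain ⟨x, _, rfl⟩ := hAsub ha; exact x.2) hantiS hpreS

end Trans
section Stages

variable {κ : Cardinal.{u}}

/-- Any `<κ`-sized family of indices in `κ.ord.ToType` is strictly bounded (κ regular). -/
theorem exists_index_bound (hreg : κ.IsRegular) {α : Type u} (g : α → κ.ord.ToType)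
    (h : #α < κ) : ∃ i, ∀ a, g a < i := by
  classical
  set e := Ordinal.ToType.mk (o := κ.ord) with he
  have hlim : Order.IsSuccLimit κ.ord := Cardinal.isSuccLimit_ord hreg.aleph0_le
  have hsup : (⨆ a, ((e.symm (g a) : Set.Iio κ.ord) : Ordinal)) < κ.ord :=
    Cardinal.iSup_lt_ord_of_isRegular hreg h (fun a => (e.symm (g a)).2)
  have hsup1 : Order.succ (⨆ a, ((e.symm (g a) : Set.Iio κ.ord) : Ordinal)) < κ.ord :=
    hlim.succ_lt hsup
  refine ⟨e ⟨_, hsup1⟩, fun a => ?_⟩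
  have hlt : e.symm (g a) < (⟨_, hsup1⟩ : Set.Iio κ.ord) := by
    rw [← Subtype.coe_lt_coe]
    exact Order.lt_succ_iff.2 (Ordinal.le_iSup _ a)
  have := (OrderIso.lt_iff_lt e).2 hlt
  rwa [e.apply_symm_apply] at this

theorem nonempty_toType (hreg : κ.IsRegular) : Nonempty κ.ord.ToType := by
  refine Ordinal.toType_nonempty_iff_ne_zero.2 (fun h => ?_)
  have : κ = 0 := by rw [← Cardinal.card_ord κ, h, Ordinal.card_zero]
  exact hreg.pos.ne' this

/-- The collection of `<κ`-sized subsets of a set of size at most `λ = λ^{<κ}` has size `≤ λ`. -/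
theorem mk_small_subsets_le (hreg : κ.IsRegular) {α : Type u} {T : Set α} {lam : Cardinal.{u}}
    (hκlam : κ ≤ lam) (hT : #T ≤ lam) (hpow : lam ^< κ = lam) :
    #{A : Set α | A ⊆ T ∧ #A < κ} ≤ lam := by
  classical
  have hne : Nonempty κ.ord.ToType := nonempty_toType hreg
  set e := Ordinal.ToType.mk (o := κ.ord) with he
  have hcover : {A : Set α | A ⊆ T ∧ #A < κ} ⊆
      ⋃ i : κ.ord.ToType, {A : Set α | A ⊆ T ∧ #A ≤ ((e.symm i : Set.Iio κ.ord) : Ordinal).card} := by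
    rintro A ⟨hAT, hAκ⟩
    have ho : (#A).ord < κ.ord := Cardinal.ord_lt_ord.2 hAκ
    refine Set.mem_iUnion.2 ⟨e ⟨(#A).ord, ho⟩, hAT, ?_⟩
    rw [e.symm_apply_apply]
    simp [Cardinal.card_ord]
  have hlamℵ : ℵ₀ ≤ lam := le_trans hreg.aleph0_le hκlam
  calc #{A : Set α | A ⊆ T ∧ #A < κ}
      ≤ #(⋃ i : κ.ord.ToType,
          {A : Set α | A ⊆ T ∧ #A ≤ ((e.symm i : Set.Iio κ.ord) : Ordinal).card}) :=
        Cardinal.mk_le_mk_of_subset hcover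
    _ ≤ #κ.ord.ToType * ⨆ i : κ.ord.ToType,
          #{A : Set α | A ⊆ T ∧ #A ≤ ((e.symm i : Set.Iio κ.ord) : Ordinal).card} :=
        Cardinal.mk_iUnion_le _
    _ ≤ lam * lam := by
        refine mul_le_mul' ?_ ?_
        · rw [Cardinal.mk_toType, Cardinal.card_ord]; exact hκlam
        · refine ciSup_le' (fun i => ?_)
          calc #{A : Set α | A ⊆ T ∧ #A ≤ ((e.symm i : Set.Iio κ.ord) : Ordinal).card}
              ≤ max #T ℵ₀ ^ ((e.symm i : Set.Iio κ.ord) : Ordinal).card :=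
                Cardinal.mk_bounded_subset_le T _
            _ ≤ lam ^ ((e.symm i : Set.Iio κ.ord) : Ordinal).card :=
                Cardinal.power_le_power_right (max_le hT hlamℵ)
            _ ≤ lam ^< κ := Cardinal.le_powerlt lam (Cardinal.lt_ord.1 (e.symm i).2)
            _ = lam := hpow
    _ = lam := Cardinal.mul_eq_self hlamℵ

/-- Transfinite iteration of a closure operator `g` along `κ.ord.ToType`. -/
noncomputable def stages {Q : Type u} (κ : Cardinal.{u}) (g : Set Q → Set Q) :
    κ.ord.ToType → Set Q :=
  (wellFounded_lt (α := κ.ord.ToType)).fix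
    (fun i rec => g (⋃ j : {j // j < i}, rec j j.2))

theorem stages_eq {Q : Type u} (κ : Cardinal.{u}) (g : Set Q → Set Q) (i : κ.ord.ToType) :
    stages κ g i = g (⋃ j : {j // j < i}, stages κ g j) := by
  rw [stages, WellFounded.fix_eq]

end Stages
/-- if every F-layered poset is κ-stationarily layered (F a normal filter on
P_κ(λ), λ = λ^{<κ} ≥ κ), then every completely F-layered poset is κ-stationarily layered. -/
theorem stmt_19 (κ : Cardinal.{u}) (hreg : κ.IsRegular) (hunc : ℵ₀ < κ)
    (X : Type u) (hkl : κ ≤ #X) (hpow : #X ^< κ = #X)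
    (F : Filter (Set X)) (hF : IsNormalFilterOn κ F)
    (hlay : ∀ (P : Type u) [PartialOrder P], FLayered κ F P → StationarilyLayered κ P)
    (Q : Type u) [PartialOrder Q] (hQ : CompletelyFLayered κ F Q) :
    StationarilyLayered κ Q := by
  classical
  by_cases hQne : Nonempty Q
  case neg =>
    have hQempty : IsEmpty Q := not_nonempty_iff.1 hQne
    intro C hCclub
    obtain ⟨c, hcC, -⟩ := hCclub.2.1 ∅ (Set.empty_subset _) (by simpa using hreg.pos)
    refine ⟨c, ⟨⟨fun p hp => isEmptyElim p, fun A _ _ _ p => isEmptyElim p⟩, ?_⟩, hcC⟩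
    calc #c ≤ #Q := Cardinal.mk_set_le c
      _ = 0 := Cardinal.mk_eq_zero Q
      _ < κ := hreg.pos
  have hlamℵ : ℵ₀ ≤ #X := le_trans hreg.aleph0_le hkl
  have haddX : ∀ {a b : Cardinal.{u}}, a ≤ #X → b ≤ #X → a + b ≤ #X := fun h1 h2 =>
    (add_le_add h1 h2).trans (le_of_eq (Cardinal.add_eq_self hlamℵ))
  have hunionX : ∀ {s t : Set Q}, #s ≤ #X → #t ≤ #X → #(s ∪ t : Set Q) ≤ #X := fun h1 h2 =>
    (Cardinal.mk_union_le _ _).trans (haddX h1 h2)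
  -- Q satisfies the κ-cc
  have hQcc : CC κ Q := by
    intro A hA
    by_contra hlt
    obtain ⟨A₀, hA₀A, hA₀⟩ := Cardinal.le_mk_iff_exists_subset.1 (not_lt.1 hlt)
    obtain ⟨S, hSreg, hScard, hA₀S⟩ := hQ.1 A₀ (hA₀ ▸ hkl)
    have hScc : CC κ ↥S :=
      cc_of_stationarilyLayered hreg hunc (hlay ↥S (hQ.2 S hSreg hScard))
    have hanti : IsPOAntichain (Subtype.val ⁻¹' A₀ : Set ↥S) := by
      rintro x hx y hy hne ⟨r, h1, h2⟩
      exact hA ↑x (hA₀A hx) ↑y (hA₀A hy) (fun h => hne (Subtype.ext h))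
        ⟨↑r, Subtype.coe_le_coe.2 h1, Subtype.coe_le_coe.2 h2⟩
    have hcard : #(Subtype.val ⁻¹' A₀ : Set ↥S) = κ := by
      rw [Cardinal.mk_preimage_of_injective_of_subset_range _ _ Subtype.val_injective
        (by rw [Subtype.range_coe]; exact hA₀S)]
      exact hA₀
    have := hScc _ hanti
    rw [hcard] at this
    exact lt_irrefl κ this
  intro C hC
  -- choice functions
  have hwx : ∀ p q : Q, ∃ r, (Compat p q → r ≤ p ∧ r ≤ q) := by
    intro p q
    by_cases h : Compat p q
    · exact ⟨h.choose, fun _ => h.choose_spec⟩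
    · exact ⟨p, fun hc => absurd hc h⟩
  choose w hw using hwx
  have hqcx : ∀ A : Set Q, ∃ p0 : Q,
      ((∃ p : Q, ∀ a ∈ A, ¬ Compat p a) → ∀ a ∈ A, ¬ Compat p0 a) := by
    intro A
    by_cases h : ∃ p : Q, ∀ a ∈ A, ¬ Compat p a
    · exact ⟨h.choose, fun _ => h.choose_spec⟩
    · exact ⟨Classical.arbitrary Q, fun hc => absurd hc h⟩
  choose qc hqc using hqcx
  have hcovx : ∀ a : Set Q, ∃ ca : Set Q, (#a < κ → ca ∈ C ∧ a ⊆ ca) := by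
    intro a
    by_cases h : #a < κ
    · obtain ⟨ca, h1, h2⟩ := hC.2.1 a (Set.subset_univ a) h
      exact ⟨ca, fun _ => ⟨h1, h2⟩⟩
    · exact ⟨∅, fun hc => absurd hc h⟩
  choose cov hcov using hcovx
  set g : Set Q → Set Q := fun T =>
    T ∪ Set.image2 w T T ∪ qc '' {A : Set Q | A ⊆ T ∧ #A < κ} ∪
      ⋃ a : ↥{A : Set Q | A ⊆ T ∧ #A < κ}, cov ↑a with hg
  set U : κ.ord.ToType → Set Q := stages κ g with hUdef
  set V : κ.ord.ToType → Set Q := fun i => ⋃ j : {j // j < i}, U j with hVdef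
  have hUV : ∀ i, U i = g (V i) := fun i => stages_eq κ g i
  set Sstar : Set Q := ⋃ i, U i with hSstardef
  have hUS : ∀ i, U i ⊆ Sstar := fun i => Set.subset_iUnion U i
  -- cardinality of one closure step
  have hgcard : ∀ T : Set Q, #T ≤ #X → #(g T) ≤ #X := by
    intro T hT
    have hsmall : #{A : Set Q | A ⊆ T ∧ #A < κ} ≤ #X := mk_small_subsets_le hreg hkl hT hpow
    have h2 : #(Set.image2 w T T) ≤ #X := by
      rw [← Set.image_prod]
      refine le_trans Cardinal.mk_image_le ?_
      calc #(T ×ˢ T : Set (Q × Q)) = #(↥T × ↥T) := Cardinal.mk_congr (Equiv.Set.prod T T)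
        _ = #T * #T := by simp [Cardinal.mk_prod]
        _ ≤ #X * #X := mul_le_mul' hT hT
        _ = #X := Cardinal.mul_eq_self hlamℵ
    have h3 : #(qc '' {A : Set Q | A ⊆ T ∧ #A < κ}) ≤ #X :=
      le_trans Cardinal.mk_image_le hsmall
    have h4 : #(⋃ a : ↥{A : Set Q | A ⊆ T ∧ #A < κ}, cov ↑a) ≤ #X := by
      calc #(⋃ a : ↥{A : Set Q | A ⊆ T ∧ #A < κ}, cov ↑a)
          ≤ Cardinal.sum (fun a : ↥{A : Set Q | A ⊆ T ∧ #A < κ} => #(cov ↑a)) :=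
            Cardinal.mk_iUnion_le_sum_mk
        _ ≤ Cardinal.sum (fun _ : ↥{A : Set Q | A ⊆ T ∧ #A < κ} => #X) := by
            refine Cardinal.sum_le_sum _ _ (fun a => ?_)
            exact le_trans (le_of_lt ((hC.1 _ ((hcov ↑a a.2.2).1)).2)) hkl
        _ = #{A : Set Q | A ⊆ T ∧ #A < κ} * #X := Cardinal.sum_const' _ _
        _ ≤ #X * #X := mul_le_mul' hsmall le_rfl
        _ = #X := Cardinal.mul_eq_self hlamℵ
    exact hunionX (hunionX (hunionX hT h2) h3) h4
  have hUcard : ∀ i, #(U i) ≤ #X := by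
    intro i
    refine (wellFounded_lt (α := κ.ord.ToType)).induction (C := fun i => #(U i) ≤ #X) i ?_
    intro i IH
    rw [hUV i]
    refine hgcard _ ?_
    calc #(V i) ≤ Cardinal.sum (fun j : {j // j < i} => #(U ↑j)) := Cardinal.mk_iUnion_le_sum_mk
      _ ≤ Cardinal.sum (fun _ : {j // j < i} => #X) :=
          Cardinal.sum_le_sum _ _ (fun j => IH j j.2)
      _ = #{j // j < i} * #X := Cardinal.sum_const' _ _
      _ ≤ #X * #X := by
          refine mul_le_mul' (le_trans (Cardinal.mk_subtype_le _) ?_) le_rfl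
          rw [Cardinal.mk_toType, Cardinal.card_ord]
          exact hkl
      _ = #X := Cardinal.mul_eq_self hlamℵ
  have hScard : #Sstar ≤ #X := by
    calc #Sstar ≤ Cardinal.sum (fun i => #(U i)) := Cardinal.mk_iUnion_le_sum_mk
      _ ≤ Cardinal.sum (fun _ : κ.ord.ToType => #X) := Cardinal.sum_le_sum _ _ hUcard
      _ = #κ.ord.ToType * #X := Cardinal.sum_const' _ _
      _ ≤ #X * #X := by
          refine mul_le_mul' ?_ le_rfl
          rw [Cardinal.mk_toType, Cardinal.card_ord]
          exact hkl
      _ = #X := Cardinal.mul_eq_self hlamℵ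
  -- stage boundedness
  have hbound : ∀ a : Set Q, a ⊆ Sstar → #a < κ → ∃ i, a ⊆ V i := by
    intro a haS hacard
    have hidx : ∀ x : ↥a, ∃ i, (x : Q) ∈ U i := fun x => Set.mem_iUnion.1 (haS x.2)
    choose idx hidx using hidx
    obtain ⟨i, hi⟩ := exists_index_bound hreg idx hacard
    refine ⟨i, fun x hx => ?_⟩
    exact Set.mem_iUnion.2 ⟨⟨idx ⟨x, hx⟩, hi ⟨x, hx⟩⟩, hidx ⟨x, hx⟩⟩
  -- compatibility witnesses
  have hcompatS : ∀ p ∈ Sstar, ∀ q ∈ Sstar, Compat p q → CompatIn Sstar p q := by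
    intro p hp q hq hpq
    have hpair : ({p, q} : Set Q) ⊆ Sstar := by rintro x (rfl | rfl) <;> assumption
    obtain ⟨i, hi⟩ := hbound {p, q} hpair ((Set.toFinite _).lt_aleph0.trans hunc)
    have hmem : w p q ∈ g (V i) :=
      Set.mem_union_left _ (Set.mem_union_left _ (Set.mem_union_right _
        (Set.mem_image2_of_mem (hi (by left; rfl)) (hi (by right; rfl)))))
    exact ⟨w p q, hUS i ((hUV i).symm ▸ hmem), (hw p q hpq).1, (hw p q hpq).2⟩
  have hregS : RegularSuborder Sstar := by
    refine ⟨hcompatS, ?_⟩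
    intro A hAS hanti hpre
    by_contra hcon
    push_neg at hcon
    have hAQanti : IsPOAntichain A := fun p hp q hq hne hc =>
      hanti p hp q hq hne (hcompatS p (hAS hp) q (hAS hq) hc)
    have hAcard : #A < κ := hQcc A hAQanti
    obtain ⟨i, hi⟩ := hbound A hAS hAcard
    have hqcmem : qc A ∈ g (V i) :=
      Set.mem_union_left _ (Set.mem_union_right _ ⟨A, ⟨hi, hAcard⟩, rfl⟩)
    have hqcS : qc A ∈ Sstar := hUS i ((hUV i).symm ▸ hqcmem)
    obtain ⟨a, haA, hci⟩ := hpre (qc A) hqcS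
    exact hqc A hcon a haA hci.compat
  -- covers land inside Sstar
  have hcovS : ∀ a : Set Q, a ⊆ Sstar → #a < κ → cov a ⊆ Sstar ∧ cov a ∈ C ∧ a ⊆ cov a := by
    intro a haS ha
    obtain ⟨i, hi⟩ := hbound a haS ha
    have hmem : cov a ⊆ g (V i) := by
      intro x hx
      exact Set.mem_union_right _ (Set.mem_iUnion.2 ⟨⟨a, hi, ha⟩, hx⟩)
    exact ⟨fun x hx => hUS i ((hUV i).symm ▸ hmem hx), (hcov a ha).1, (hcov a ha).2⟩
  -- Sstar is stationarily layered
  have hSL : StationarilyLayered κ ↥Sstar := hlay ↥Sstar (hQ.2 Sstar hregS hScard)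
  set C' : Set (Set ↥Sstar) := {c | Subtype.val '' c ∈ C} with hC'def
  have hC'club : PkClub κ C' := by
    refine ⟨?_, ?_, ?_⟩
    · intro c hc
      refine ⟨Set.subset_univ _, ?_⟩
      have := (hC.1 _ hc).2
      rwa [Cardinal.mk_image_eq Subtype.val_injective] at this
    · intro a _ ha
      have ha' : #(Subtype.val '' a : Set Q) < κ := by
        rwa [Cardinal.mk_image_eq Subtype.val_injective]
      have haS : (Subtype.val '' a : Set Q) ⊆ Sstar := by
        rintro x ⟨y, _, rfl⟩; exact y.2
      obtain ⟨hsub, hmemC, hcover⟩ := hcovS _ haS ha'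
      refine ⟨Subtype.val ⁻¹' cov (Subtype.val '' a), ?_, ?_⟩
      · show Subtype.val '' (Subtype.val ⁻¹' cov (Subtype.val '' a)) ∈ C
        rw [Set.image_preimage_eq_inter_range, Subtype.range_coe,
          Set.inter_eq_self_of_subset_left hsub]
        exact hmemC
      · intro x hx
        exact hcover ⟨x, hx, rfl⟩
    · intro D hDne hDC' hDchain hDcard
      show Subtype.val '' ⋃₀ D ∈ C
      have himg : Subtype.val '' ⋃₀ D = ⋃₀ ((Set.image Subtype.val) '' D) := by
        simp [Set.image_sUnion, Set.sUnion_image]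
      rw [himg]
      refine hC.2.2 _ (hDne.image _) ?_ ?_ ?_
      · rintro _ ⟨d, hd, rfl⟩; exact hDC' hd
      · rintro _ ⟨d1, h1, rfl⟩ _ ⟨d2, h2, rfl⟩ hne
        by_cases hdd : d1 = d2
        · exact absurd (by rw [hdd]) hne
        · rcases hDchain h1 h2 hdd with h | h
          · exact Or.inl (Set.image_mono h)
          · exact Or.inr (Set.image_mono h)
      · exact lt_of_le_of_lt Cardinal.mk_image_le hDcard
  obtain ⟨c, hcmem⟩ := hSL C' hC'club
  refine ⟨Subtype.val '' c, ⟨?_, ?_⟩, hcmem.2⟩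
  · exact regularSuborder_trans hregS hcmem.1.1
  · rw [Cardinal.mk_image_eq Subtype.val_injective]
    exact hcmem.1.2

end Layered
end
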